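/- arXiv:1902.04619 — 12 statements merged into one kernel-verified Lean document; each statement's English description precedes it below -/
import Mathlib

section
/- If q' and q are valid steps for a word w of length n (i.e., 1 ≤ q ≤ n/2, the length (n−q) suffix of w equals its length (n−q) prefix, and similarly for q'), with q' < q, then the infinite periodic sequences w^{q*∞} and w^{q'*∞} (defined by repeating the length-q prefix, respectively length-q' prefix, of w) are equal. -/
/-- If `w` has period `q` on `[0,n)`, then `w j = w (j % q)` for `j < n`. -/
lemma aux_mod_period {A : Type*} (q n : ℕ) (w : ℕ → A) (hq : 0 < q)
    (h : ∀ i, i + q < n → w (i + q) = w i) :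
    ∀ j, j < n → w j = w (j % q) := by
  intro j
  induction j using Nat.strong_induction_on with
  | _ j ih =>
    intro hj
    by_cases hjq : j < q
    · rw [Nat.mod_eq_of_lt hjq]
    · push_neg at hjq
      have hjq' : j - q + q = j := Nat.sub_add_cancel hjq
      have h1 : w j = w (j - q) := by
        have := h (j - q) (by omega)
        rwa [hjq'] at this
      rw [h1, ih (j - q) (by omega) (by omega), Nat.mod_eq_sub_mod hjq]

/-- Subtracting a multiple of `d` preserves the residue mod `d`. -/
lemma aux_sub_mod (d b j : ℕ) (hdb : d ∣ b) (hbj : b ≤ j) : (j - b) % d = j % d := by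
  obtain ⟨k, rfl⟩ := hdb
  conv_rhs => rw [← Nat.sub_add_cancel hbj, Nat.add_mul_mod_self_left]

/-- Fine–Wilf: periods `q` and `q'` on `[0,n)` with `q + q' ≤ n` give the
`gcd q q'` structure: `w j = w (j % gcd q q')` for `j < n`. -/
lemma aux_fw {A : Type*} : ∀ m q q' n (w : ℕ → A), q + q' = m → 0 < q → 0 < q' →
    q + q' ≤ n →
    (∀ i, i + q < n → w (i + q) = w i) →
    (∀ i, i + q' < n → w (i + q') = w i) →
    ∀ j, j < n → w j = w (j % Nat.gcd q q') := by
  intro m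
  induction m using Nat.strong_induction_on with
  | _ m ih =>
    intro q q' n w hm hq hq' hn hpq hpq' j hj
    rcases lt_trichotomy q q' with hlt | heq | hlt
    · -- q < q' : symmetric, reduce periods to (q, q' - q) on [0, n - q)
      have hgcd : Nat.gcd q q' = Nat.gcd q (q' - q) :=
        (Nat.gcd_sub_self_right hlt.le).symm
      have key : ∀ j, j < n → w j = w (j % Nat.gcd q (q' - q)) := by
        intro j
        induction j using Nat.strong_induction_on with
        | _ j ih2 =>
          intro hj
          by_cases hjn : j < n - q
          · exact ih (q + (q' - q)) (by omega) q (q' - q) (n - q) w rfl hq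
              (by omega) (by omega)
              (fun i hi => hpq i (by omega))
              (fun i hi => by
                have : w (i + (q' - q) + q) = w (i + (q' - q)) := hpq _ (by omega)
                have h2 : w (i + q') = w i := hpq' i (by omega)
                have h3 : i + (q' - q) + q = i + q' := by omega
                rw [h3] at this
                rw [← this, h2]) j hjn
          · have h1 : w j = w (j - q) := by
              have := hpq (j - q) (by omega)
              rwa [Nat.sub_add_cancel (by omega)] at this
            have h2 : (j - q) % Nat.gcd q (q' - q) = j % Nat.gcd q (q' - q) :=
              aux_sub_mod _ q j (hgcd ▸ Nat.gcd_dvd_left q q') (by omega)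
            rw [h1, ih2 (j - q) (by omega) (by omega), h2]
      rw [hgcd]; exact key j hj
    · subst heq
      rw [Nat.gcd_self]
      exact aux_mod_period q n w hq hpq j hj
    · -- q' < q : reduce periods to (q - q', q') on [0, n - q')
      have hgcd : Nat.gcd q q' = Nat.gcd (q - q') q' :=
        (Nat.gcd_sub_self_left hlt.le).symm
      have key : ∀ j, j < n → w j = w (j % Nat.gcd (q - q') q') := by
        intro j
        induction j using Nat.strong_induction_on with
        | _ j ih2 =>
          intro hj
          by_cases hjn : j < n - q'
          · exact ih ((q - q') + q') (by omega) (q - q') q' (n - q') w rfl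
              (by omega) hq' (by omega)
              (fun i hi => by
                have : w (i + (q - q') + q') = w (i + (q - q')) := hpq' _ (by omega)
                have h2 : w (i + q) = w i := hpq i (by omega)
                have h3 : i + (q - q') + q' = i + q := by omega
                rw [h3] at this
                rw [← this, h2])
              (fun i hi => hpq' i (by omega)) j hjn
          · have h1 : w j = w (j - q') := by
              have := hpq' (j - q') (by omega)
              rwa [Nat.sub_add_cancel (by omega)] at this
            have h2 : (j - q') % Nat.gcd (q - q') q' = j % Nat.gcd (q - q') q' :=
              aux_sub_mod _ q' j (hgcd ▸ Nat.gcd_dvd_right q q') (by omega)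
            rw [h1, ih2 (j - q') (by omega) (by omega), h2]
      rw [hgcd]; exact key j hj

/-- If `q'` and `q` are valid steps for a word `w` of length `n`
(i.e. `1 ≤ q ≤ n/2` and the suffix of length `n - q` equals the prefix of the
same length, similarly for `q'`), with `q' < q`, then the periodic sequences
`w^{q*∞}` and `w^{q'*∞}` are equal.  Words are modelled as functions `ℕ → A`
(only the first `n` letters are relevant, 0-indexed); the overlap condition
reads `w (i + q) = w i` for all `i` with `i + q < n`. -/
theorem stmt0 {A : Type*} [Fintype A] (n : ℕ) (w : ℕ → A) (q q' : ℕ)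
    (hq1 : 1 ≤ q) (hq2 : 2 * q ≤ n)
    (hq'1 : 1 ≤ q') (hq'2 : 2 * q' ≤ n)
    (hq : ∀ i, i + q < n → w (i + q) = w i)
    (hq' : ∀ i, i + q' < n → w (i + q') = w i)
    (hlt : q' < q) :
    (fun i => w (i % q)) = (fun i => w (i % q')) := by
  set d := Nat.gcd q q' with hd
  have hfw : ∀ j, j < n → w j = w (j % d) :=
    aux_fw (q + q') q q' n w rfl hq1 hq'1 (by omega) hq hq'
  funext i
  have h1 : w (i % q) = w ((i % q) % d) := hfw (i % q) (by
    have := Nat.mod_lt i (show 0 < q by omega); omega)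
  have h2 : w (i % q') = w ((i % q') % d) := hfw (i % q') (by
    have := Nat.mod_lt i (show 0 < q' by omega); omega)
  rw [h1, h2, Nat.mod_mod_of_dvd i (Nat.gcd_dvd_left q q'),
    Nat.mod_mod_of_dvd i (Nat.gcd_dvd_right q q')]
end

section
/- If q' and q satisfy the overlap condition for a word w of length n (with 1 ≤ q', q ≤ n/2), then the prefixes of w of lengths q and q' commute as words: w_{[1,q']} w_{[1,q]} = w_{[1,q]} w_{[1,q']}. -/
/-- If `q'` and `q` satisfy the overlap condition for a word `w`
(with `1 ≤ q, q' ≤ |w|/2`), then the prefixes of `w` of lengths `q` and `q'`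
commute as words.  The overlap condition "suffix of length `n - q` equals the
prefix of length `n - q`" is expressed as `w.drop q = w.take (w.length - q)`. -/
theorem stmt1 {A : Type*} [Fintype A] (w : List A) (q q' : ℕ)
    (hq1 : 1 ≤ q) (hq2 : 2 * q ≤ w.length)
    (hq'1 : 1 ≤ q') (hq'2 : 2 * q' ≤ w.length)
    (hq : w.drop q = w.take (w.length - q))
    (hq' : w.drop q' = w.take (w.length - q')) :
    w.take q' ++ w.take q = w.take q ++ w.take q' := by
  have key : ∀ a b : ℕ, 2 * a ≤ w.length → 2 * b ≤ w.length →
      w.drop a = w.take (w.length - a) →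
      w.take a ++ w.take b = w.take (a + b) := by
    intro a b ha hb h
    rw [List.take_add, h, List.take_take, min_eq_left (by omega)]
  rw [key q q' hq2 hq'2 hq, key q' q hq'2 hq2 hq', Nat.add_comm]
end

section
/- If q' < q both satisfy the overlap condition for a word w of length n (with 1 ≤ q', q ≤ n/2), then their greatest common divisor gcd(q,q') also satisfies the overlap condition for w. -/
/-- `w` has period `p`: every two positions at distance `p` agree. -/
private def HasPer {A : Type*} (w : List A) (p : ℕ) : Prop :=
  ∀ i (h : i + p < w.length), w[i]'(by omega) = w[i + p]

private lemma idx_congr {A : Type*} {w : List A} {i j : ℕ} (e : i = j)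
    (h : i < w.length) : w[i]'h = w[j]'(e ▸ h) := by subst e; rfl

private lemma hasPer_of_overlap {A : Type*} (w : List A) (p : ℕ)
    (h : w.drop p = w.take (w.length - p)) : HasPer w p := by
  intro i hi
  have h1 : i < w.length - p := by omega
  have := congrArg (fun l => l[i]?) h
  simp only [List.getElem?_drop, List.getElem?_take, h1, if_pos] at this
  rw [List.getElem?_eq_getElem (by omega), List.getElem?_eq_getElem (by omega)] at this
  have h2 := Option.some.inj this
  exact h2.symm.trans (idx_congr (Nat.add_comm p i) (by omega))

private lemma overlap_of_hasPer {A : Type*} (w : List A) (p : ℕ) (hp : p ≤ w.length)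
    (h : HasPer w p) : w.drop p = w.take (w.length - p) := by
  apply List.ext_getElem (by simp)
  intro i h1 h2
  simp only [List.getElem_drop, List.getElem_take]
  simp only [List.length_drop] at h1
  exact ((h i (by omega)).trans (idx_congr (by omega) (by omega))).symm

private lemma hasPer_sub {A : Type*} (w : List A) (a b : ℕ) (hab : a < b)
    (hn : a + b ≤ w.length) (ha : HasPer w a) (hb : HasPer w b) :
    HasPer w (b - a) := by
  intro i hi
  by_cases hc : i + b < w.length
  · have e2 := hb i hc
    have e3 := ha (i + (b - a)) (by omega)
    exact e2.trans ((idx_congr (show i + b = i + (b - a) + a by omega) (by omega)).trans e3.symm)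
  · have hia : a ≤ i := by omega
    have e1 := (ha (i - a) (by omega)).trans (idx_congr (show i - a + a = i by omega) (by omega))
    have e2 := (hb (i - a) (by omega)).trans
      (idx_congr (show i - a + b = i + (b - a) by omega) (by omega))
    exact e1.symm.trans e2

private lemma fineWilf {A : Type*} (w : List A) :
    ∀ s a b, a + b ≤ s → 1 ≤ a → 1 ≤ b → a + b ≤ w.length →
      HasPer w a → HasPer w b → HasPer w (Nat.gcd a b) := by
  intro s
  induction s with
  | zero => intro a b h ha hb; omega
  | succ n ih =>
    intro a b hs ha hb hn hpa hpb
    rcases lt_trichotomy a b with h | h | h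
    · have hsub : HasPer w (b - a) := hasPer_sub w a b h hn hpa hpb
      have := ih a (b - a) (by omega) ha (by omega) (by omega) hpa hsub
      rwa [Nat.gcd_sub_self_right (by omega)] at this
    · subst h; rwa [Nat.gcd_self]
    · have hsub : HasPer w (a - b) := hasPer_sub w b a h (by omega) hpb hpa
      have := ih (a - b) b (by omega) (by omega) hb (by omega) hsub hpb
      rwa [Nat.gcd_sub_self_left (by omega)] at this

/-- If `q' < q` both satisfy the overlap condition for a word `w`
of length `n` (with `1 ≤ q', q ≤ n/2`), then `gcd q q'` also satisfies the
overlap condition for `w`. -/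
theorem stmt2 {A : Type*} [Fintype A] (w : List A) (q q' : ℕ)
    (hq1 : 1 ≤ q) (hq2 : 2 * q ≤ w.length)
    (hq'1 : 1 ≤ q') (hq'2 : 2 * q' ≤ w.length)
    (hq : w.drop q = w.take (w.length - q))
    (hq' : w.drop q' = w.take (w.length - q'))
    (hlt : q' < q) :
    1 ≤ Nat.gcd q q' ∧ 2 * Nat.gcd q q' ≤ w.length ∧
      w.drop (Nat.gcd q q') = w.take (w.length - Nat.gcd q q') := by
  have hg1 : 1 ≤ Nat.gcd q q' := Nat.one_le_iff_ne_zero.mpr (Nat.gcd_ne_zero_left (by omega))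
  have hg2 : Nat.gcd q q' ≤ q' := Nat.le_of_dvd hq'1 (Nat.gcd_dvd_right q q')
  have hper : HasPer w (Nat.gcd q q') :=
    fineWilf w (q + q') q q' le_rfl hq1 hq'1 (by omega)
      (hasPer_of_overlap w q hq) (hasPer_of_overlap w q' hq')
  exact ⟨hg1, by omega, overlap_of_hasPer w _ (by omega) hper⟩
end

section
/- Let w be a word of length n and q satisfy the overlap condition for w (1 ≤ q ≤ n/2). Let w^{q*2} be the word of length n+q in which w occurs at positions 1 and q+1. If for some 1 ≤ i < j ≤ q the length-n factors of w^{q*2} starting at positions i and j are equal, then q'' = j−i also satisfies the overlap condition for w (and q'' < q). -/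
/-- Let `w` have length `n` and let `q` satisfy the overlap
condition for `w` (`1 ≤ q ≤ n/2`).  The word `w^{q*2}` of length `n + q`, in
which `w` occurs at positions `1` and `q+1`, equals `w.take q ++ w`.
If for some `1 ≤ i < j ≤ q` the length-`n` factors of `w^{q*2}` starting at
(1-indexed) positions `i` and `j` are equal, then `q'' = j - i` also satisfies
the overlap condition for `w` (and `q'' < q`). -/
theorem stmt3 {A : Type*} [Fintype A] (w : List A) (n q : ℕ)
    (hn : w.length = n) (hq1 : 1 ≤ q) (hq2 : 2 * q ≤ n)
    (hq : w.drop q = w.take (n - q))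
    (i j : ℕ) (hi : 1 ≤ i) (hij : i < j) (hj : j ≤ q)
    (heq : ((w.take q ++ w).drop (i - 1)).take n
         = ((w.take q ++ w).drop (j - 1)).take n) :
    j - i < q ∧ 1 ≤ j - i ∧ 2 * (j - i) ≤ n ∧
      w.drop (j - i) = w.take (n - (j - i)) := by
  set d := j - i with hdd
  have hd1 : 1 ≤ d := by omega
  have hdq : d < q := by omega
  refine ⟨hdq, hd1, by omega, ?_⟩
  -- pointwise overlap condition
  have hov : ∀ t, t < n - q → w[q + t]? = w[t]? := by
    intro t ht
    have h1 : (w.drop q)[t]? = (w.take (n - q))[t]? := by rw [hq]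
    simpa [List.getElem?_drop, List.getElem?_take, ht] using h1
  -- the double word agrees with w on [0, n)
  have hu : ∀ m, m < n → (w.take q ++ w)[m]? = w[m]? := by
    intro m hm
    have hlen : (w.take q).length = q := by
      rw [List.length_take, hn]; omega
    rcases lt_or_ge m q with h | h
    · rw [List.getElem?_append, hlen, if_pos h, List.getElem?_take, if_pos h]
    · rw [List.getElem?_append, hlen, if_neg (by omega)]
      have := hov (m - q) (by omega)
      rw [show q + (m - q) = m from by omega] at this
      exact this.symm
  -- pointwise consequence of heq
  have hkey : ∀ k, k < n →
      (w.take q ++ w)[i - 1 + k]? = (w.take q ++ w)[j - 1 + k]? := by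
    intro k hk
    have := congrArg (fun l => l[k]?) heq
    simpa [List.getElem?_take, List.getElem?_drop, hk] using this
  have case1 : ∀ m, i - 1 ≤ m → m + d < n → w[m]? = w[m + d]? := by
    intro m h1 h2
    have hk := hkey (m - (i - 1)) (by omega)
    rw [show i - 1 + (m - (i - 1)) = m from by omega,
        show j - 1 + (m - (i - 1)) = m + d from by omega] at hk
    rwa [hu m (by omega), hu (m + d) (by omega)] at hk
  have main : ∀ m, m + d < n → w[m]? = w[m + d]? := by
    intro m hm
    rcases le_or_gt (i - 1) m with h | h
    · exact case1 m h hm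
    · have a1 := hov m (by omega)
      have a2 := hov (m + d) (by omega)
      have a3 := case1 (m + q) (by omega) (by omega)
      rw [show q + m = m + q from by omega] at a1
      rw [show q + (m + d) = m + q + d from by omega] at a2
      rw [← a1, ← a2, a3]
  apply List.ext_getElem?
  intro t
  rw [List.getElem?_drop, List.getElem?_take]
  rcases lt_or_ge t (n - d) with h | h
  · rw [if_pos h]
    have := main t (by omega)
    rw [show t + d = d + t from by omega] at this
    exact this.symm
  · rw [if_neg (by omega)]
    exact List.getElem?_eq_none (by rw [hn]; omega)
end

section
/- Let w be a word of length n and q be the minimal positive integer ≤ n/2 satisfying the overlap condition for w. Then the q length-n factors of w^{q*2} beginning at positions 1, 2, ..., q are pairwise distinct. -/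
/-- Let `w` have length `n` and let `q` be the minimal positive
integer `≤ n/2` satisfying the overlap condition for `w`.  Then the `q`
length-`n` factors of `w^{q*2} = w.take q ++ w` beginning at (1-indexed)
positions `1, 2, ..., q` are pairwise distinct. -/
theorem stmt4 {A : Type*} [Fintype A] (w : List A) (n q : ℕ)
    (hn : w.length = n) (hq1 : 1 ≤ q) (hq2 : 2 * q ≤ n)
    (hq : w.drop q = w.take (n - q))
    (hmin : ∀ r, 1 ≤ r → 2 * r ≤ n → w.drop r = w.take (n - r) → q ≤ r)
    (i j : ℕ) (hi : 1 ≤ i) (hij : i ≤ j) (hj : j ≤ q)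
    (heq : ((w.take q ++ w).drop (i - 1)).take n
         = ((w.take q ++ w).drop (j - 1)).take n) :
    i = j := by
  by_contra hne
  have hij' : i < j := lt_of_le_of_ne hij hne
  have hqn : q ≤ n := by omega
  have hlq : (w.take q).length = q := by simp [hn, min_eq_left hqn]
  have hulen : (w.take q ++ w).length = q + n := by simp [hn, hlq]
  set a := i - 1 with ha
  set d := j - i with hd
  have hd1 : 1 ≤ d := by omega
  have hdq : d < q := by omega
  have haq : a < q := by omega
  -- periodicity of w with period q
  have hwper : ∀ k (h : k < n - q), w[q + k]'(by omega) = w[k]'(by omega) := by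
    intro k h
    have := List.getElem_of_eq hq (i := k) (by simp [hn]; omega)
    simpa [List.getElem_drop, List.getElem_take] using this
  -- the padded word agrees with w on first n and on last n positions
  have hu2 : ∀ t (h : t < n),
      (w.take q ++ w)[q + t]'(by omega) = w[t]'(by omega) := by
    intro t h
    rw [List.getElem_append_right (by omega)]
    congr 1
    omega
  have hu1 : ∀ t (h : t < n),
      (w.take q ++ w)[t]'(by omega) = w[t]'(by omega) := by
    intro t h
    by_cases ht : t < q
    · rw [List.getElem_append_left (by omega)]
      simp [List.getElem_take]
    · rw [List.getElem_append_right (by omega)]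
      have e : w[t - (w.take q).length]'(by omega) = w[t - q]'(by omega) := by
        congr 1 <;> omega
      rw [e]
      have := hwper (t - q) (by omega)
      exact ((show w[t]'(by omega) = w[q + (t - q)]'(by omega) by congr 1 <;> omega).trans this).symm
  -- pointwise consequence of heq
  have F : ∀ k (h : k < n),
      (w.take q ++ w)[a + k]'(by omega) = (w.take q ++ w)[a + d + k]'(by omega) := by
    intro k h
    have hlen : k < (((w.take q ++ w).drop a).take n).length := by
      simp [hulen]; omega
    have := List.getElem_of_eq heq (i := k) hlen
    rw [List.getElem_take, List.getElem_take, List.getElem_drop, List.getElem_drop] at this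
    have h2 : (w.take q ++ w)[a + d + k]'(by omega)
        = (w.take q ++ w)[j - 1 + k]'(by omega) := by congr 1 <;> omega
    rw [h2]; exact this
  -- derive period d of w
  have hwd : ∀ m (h : m < n - d), w[m + d]'(by omega) = w[m]'(by omega) := by
    intro m h
    by_cases hm : a ≤ m
    · have hF := F (m - a) (by omega)
      have e1 : (w.take q ++ w)[a + (m - a)]'(by omega) = w[m]'(by omega) := by
        rw [show (w.take q ++ w)[a + (m - a)]'(by omega)
            = (w.take q ++ w)[m]'(by omega) by congr 1 <;> omega]
        exact hu1 m (by omega)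
      have e2 : (w.take q ++ w)[a + d + (m - a)]'(by omega) = w[m + d]'(by omega) := by
        rw [show (w.take q ++ w)[a + d + (m - a)]'(by omega)
            = (w.take q ++ w)[m + d]'(by omega) by congr 1 <;> omega]
        exact hu1 (m + d) (by omega)
      rw [e1, e2] at hF
      exact hF.symm
    · have hF := F (m + q - a) (by omega)
      have e1 : (w.take q ++ w)[a + (m + q - a)]'(by omega) = w[m]'(by omega) := by
        rw [show (w.take q ++ w)[a + (m + q - a)]'(by omega)
            = (w.take q ++ w)[q + m]'(by omega) by congr 1 <;> omega]
        exact hu2 m (by omega)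
      have e2 : (w.take q ++ w)[a + d + (m + q - a)]'(by omega) = w[m + d]'(by omega) := by
        rw [show (w.take q ++ w)[a + d + (m + q - a)]'(by omega)
            = (w.take q ++ w)[q + (m + d)]'(by omega) by congr 1 <;> omega]
        exact hu2 (m + d) (by omega)
      rw [e1, e2] at hF
      exact hF.symm
  -- hence w.drop d = w.take (n - d), contradicting minimality of q
  have hq' : w.drop d = w.take (n - d) := by
    apply List.ext_getElem
    · simp [hn]
    · intro m h1 h2
      rw [List.getElem_drop, List.getElem_take]
      have h1' : m < n - d := by simp [hn] at h1; omega
      rw [show w[d + m]'(by omega) = w[m + d]'(by omega) by congr 1 <;> omega]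
      exact hwd m h1'
  have := hmin d hd1 (by omega) hq'
  omega
end

section
/- Let L be a recurrent language (for any u,v ∈ L there exists w with uwv ∈ L). Fix n and suppose the Rauzy graph Γ_n of L contains a closed circuit through pairwise distinct vertices w₁, ..., w_k (with an edge from w_i to w_{i+1}, indices mod k) such that no w_i is left special. Then L is periodic: there exists p ∈ ℕ such that every word V ∈ L satisfies V_i = V_{i+p} for all 1 ≤ i ≤ |V| − p. (In fact one can take p = k.) -/
/-- A language over an alphabet `A`. -/
def IsLanguage {A : Type*} (L : Set (List A)) : Prop :=
  (∀ w ∈ L, w ≠ ([] : List A)) ∧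
  (∀ w ∈ L, ∀ u : List A, u ≠ [] → u <:+: w → u ∈ L) ∧
  (∀ w ∈ L, ∃ a b : A, (a :: (w ++ [b])) ∈ L)

/-- `L` is recurrent: any two words of `L` can be joined within `L`. -/
def IsRecurrent {A : Type*} (L : Set (List A)) : Prop :=
  ∀ u ∈ L, ∀ v ∈ L, ∃ w ∈ L, u ++ w ++ v ∈ L

/-- `w` is left special in `L`. -/
def LeftSpecial {A : Type*} (L : Set (List A)) (w : List A) : Prop :=
  ∃ a b : A, a ≠ b ∧ (a :: w) ∈ L ∧ (b :: w) ∈ L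

/-- Edge of the Rauzy graph `Γ_n` of `L`, from `u` to `v`. -/
def RauzyEdge {A : Type*} (L : Set (List A)) (n : ℕ) (u v : List A) : Prop :=
  ∃ c ∈ L, c.length = n + 1 ∧ c.take n = u ∧ c.drop 1 = v

/-- If a recurrent language `L` has, in some Rauzy graph `Γ_n`, a
closed circuit through pairwise distinct vertices `w 0, ..., w (k-1)` none of
which is left special, then `L` is periodic (with period `p`, e.g. `p = k`):
for every `V ∈ L`, `V_i = V_{i+p}` whenever both are defined.  (0-indexed.) -/
theorem stmt7 {A : Type*} [Fintype A] (L : Set (List A)) (hL : IsLanguage L)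
    (hrec : IsRecurrent L) (n k : ℕ) (hk : 0 < k) (w : ℕ → List A)
    (hmem : ∀ i < k, w i ∈ L) (hlen : ∀ i < k, (w i).length = n)
    (hdist : ∀ i < k, ∀ j < k, w i = w j → i = j)
    (hedge : ∀ i < k, RauzyEdge L n (w i) (w ((i + 1) % k)))
    (hnotls : ∀ i < k, ¬ LeftSpecial L (w i)) :
    ∃ p : ℕ, 0 < p ∧ ∀ V ∈ L, ∀ i : ℕ, i + p < V.length →
      V[i]? = V[i + p]? := by
  have hw0 : w 0 ∈ L := hmem 0 hk
  have hn : 0 < n := by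
    rcases Nat.eq_zero_or_pos n with h | h
    · exact absurd (List.eq_nil_of_length_eq_zero (by rw [hlen 0 hk, h]))
        (hL.1 (w 0) hw0)
    · exact h
  -- predecessor function on the cycle
  set pr : ℕ → ℕ := fun i => if i = 0 then k - 1 else i - 1 with hpr
  have hpr_lt : ∀ i, i < k → pr i < k := by
    intro i hi; simp only [hpr]; split <;> omega
  have hpr_succ : ∀ i, i < k → (pr i + 1) % k = i := by
    intro i hi; simp only [hpr]; split
    · subst ‹i = 0›; rw [Nat.sub_add_cancel hk, Nat.mod_self]
    · rw [Nat.sub_add_cancel (by omega)]; exact Nat.mod_eq_of_lt hi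
  -- unique predecessor lemma
  have huniq : ∀ i, i < k → ∀ x, RauzyEdge L n x (w i) → x = w (pr i) := by
    intro i hi x ⟨c, hcL, hclen, hctake, hcdrop⟩
    obtain ⟨a, c', rfl⟩ := List.exists_cons_of_ne_nil
      (show c ≠ [] by intro h; rw [h] at hclen; simp at hclen)
    simp only [List.drop_one, List.tail_cons] at hcdrop
    subst hcdrop
    obtain ⟨c2, hc2L, hc2len, hc2take, hc2drop⟩ := hedge (pr i) (hpr_lt i hi)
    rw [hpr_succ i hi] at hc2drop
    obtain ⟨b, c2', rfl⟩ := List.exists_cons_of_ne_nil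
      (show c2 ≠ [] by intro h; rw [h] at hc2len; simp at hc2len)
    simp only [List.drop_one, List.tail_cons] at hc2drop
    subst hc2drop
    have hab : a = b := by
      by_contra hab
      exact hnotls i hi ⟨a, b, hab, hcL, hc2L⟩
    rw [← hctake, hab, hc2take]
  refine ⟨k, hk, ?_⟩
  intro V hV i hik
  obtain ⟨m, hmL, hWL⟩ := hrec V hV (w 0) hw0
  set W : List A := V ++ m ++ w 0 with hWdef
  set T : ℕ := V.length + m.length with hT
  have hWlen : W.length = T + n := by
    simp [hWdef, hT, hlen 0 hk]; omega
  -- every length-n window of W is in L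
  have hedge' : ∀ t, t + n + 1 ≤ W.length →
      RauzyEdge L n ((W.drop t).take n) ((W.drop (t + 1)).take n) := by
    intro t ht
    refine ⟨(W.drop t).take (n + 1), ?_, ?_, ?_, ?_⟩
    · refine hL.2.1 W hWL _ ?_ ?_
      · have : ((W.drop t).take (n + 1)).length = n + 1 := by
          rw [List.length_take, List.length_drop]; omega
        intro h; rw [h] at this; simp at this
      · exact ⟨W.take t, (W.drop t).drop (n + 1), by
          rw [List.append_assoc, List.take_append_drop, List.take_append_drop]⟩
    · rw [List.length_take, List.length_drop]; omega
    · rw [List.take_take]; congr 1; omega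
    · rw [List.drop_take, List.drop_drop]
      congr 1 <;> omega
  have hlast : (W.drop T).take n = w 0 := by
    have : W.drop T = w 0 := by
      rw [hWdef, show T = (V ++ m).length by simp [hT], List.drop_left]
    rw [this, ← hlen 0 hk, List.take_length]
  have hclaim : ∀ j, j ≤ T → ∃ i' , i' < k ∧ (i' + j) % k = 0 ∧
      (W.drop (T - j)).take n = w i' := by
    intro j
    induction j with
    | zero => exact fun _ => ⟨0, hk, by simp, by simpa using hlast⟩
    | succ j ih =>
      intro hj
      obtain ⟨i', hi'k, hi'mod, hi'eq⟩ := ih (by omega)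
      have hed : RauzyEdge L n ((W.drop (T - (j + 1))).take n)
          ((W.drop (T - j)).take n) := by
        have h1 : T - (j + 1) + 1 = T - j := by omega
        have h2 := hedge' (T - (j + 1)) (by omega)
        rwa [h1] at h2
      rw [hi'eq] at hed
      have hx := huniq i' hi'k _ hed
      refine ⟨pr i', hpr_lt i' hi'k, ?_, hx⟩
      have h1 : pr i' + (j + 1) = (pr i' + 1) + j := by omega
      have h2 : (pr i' + 1) % k = i' % k := by
        rw [hpr_succ i' hi'k, Nat.mod_eq_of_lt hi'k]
      have h3 : ((pr i' + 1) + j) % k = (i' + j) % k :=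
        Nat.ModEq.add_right j h2
      rw [h1, h3, hi'mod]
  have hiT : i + k ≤ T := by omega
  obtain ⟨i1, hi1k, hm1, he1⟩ := hclaim (T - i) (Nat.sub_le _ _)
  obtain ⟨i2, hi2k, hm2, he2⟩ := hclaim (T - (i + k)) (Nat.sub_le _ _)
  rw [show T - (T - i) = i by omega] at he1
  rw [show T - (T - (i + k)) = i + k by omega] at he2
  have hi12 : i1 = i2 := by
    have hJ : T - i = (T - (i + k)) + k := by omega
    rw [hJ, ← Nat.add_assoc, Nat.add_mod_right] at hm1
    have : i1 % k = i2 % k :=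
      Nat.ModEq.add_right_cancel' (T - (i + k)) (hm1.trans hm2.symm)
    rwa [Nat.mod_eq_of_lt hi1k, Nat.mod_eq_of_lt hi2k] at this
  have hwin : (W.drop i).take n = (W.drop (i + k)).take n := by
    rw [he1, he2, hi12]
  have hget : ∀ t, W[t]? = ((W.drop t).take n)[0]? := by
    intro t
    rw [List.getElem?_take_of_lt hn, List.getElem?_drop, Nat.add_zero]
  have hWget : W[i]? = W[i + k]? := by
    rw [hget i, hget (i + k), hwin]
  have hVW : ∀ t, t < V.length → V[t]? = W[t]? := by
    intro t ht
    rw [hWdef, List.getElem?_append_left (by simpa using by omega : t < (V ++ m).length),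
      List.getElem?_append_left ht]
  rw [hVW i (by omega), hVW (i + k) hik, hWget]
end

section
/- The recurrence property of languages is not implied by strong connectedness of all Rauzy graphs: the language L over {0,1} consisting of all nonempty binary words containing at most one occurrence of the letter 1 has every Rauzy graph Γ_n strongly connected, but L is not recurrent (there is no w with 1w1 ∈ L). -/
/-- The language over `{0,1}` of nonempty words containing at most one `1`. -/
def L11 : Set (List (Fin 2)) :=
  {w : List (Fin 2) | w ≠ [] ∧ w.count 1 ≤ 1}

lemma L11_reach_zero (u : List (Fin 2)) (hc : u.count 1 ≤ 1) (m : ℕ) :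
    Relation.ReflTransGen (RauzyEdge L11 (u.length + m))
      (u ++ List.replicate m 0) (List.replicate (u.length + m) 0) := by
  induction u generalizing m with
  | nil => simpa using Relation.ReflTransGen.refl
  | cons a u' ih =>
    have hc' : u'.count 1 ≤ 1 := le_trans (by simp [List.count_cons]) hc
    refine Relation.ReflTransGen.head (b := u' ++ List.replicate (m + 1) 0) ?_ ?_
    · refine ⟨(a :: u' ++ List.replicate m 0) ++ [0], ⟨by simp, ?_⟩, ?_, ?_, ?_⟩
      · simpa [List.count_append, List.count_replicate, List.count_cons] using hc
      · simp; try omega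
      · have hlen : (a :: u').length + m = (a :: u' ++ List.replicate m 0).length := by
          simp; try omega
        rw [hlen, List.take_left]
      · simp [List.replicate_succ']
    · have := ih hc' (m + 1)
      have h1 : u'.length + (m + 1) = (a :: u').length + m := by simp; try omega
      rw [h1] at this
      simpa [List.replicate_succ'] using this

lemma L11_reach_from_zero (s p : List (Fin 2)) (hc : (p ++ s).count 1 ≤ 1) :
    Relation.ReflTransGen (RauzyEdge L11 (s.length + p.length))
      (List.replicate s.length 0 ++ p) (p ++ s) := by
  induction s generalizing p with
  | nil => simpa using Relation.ReflTransGen.refl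
  | cons a s' ih =>
    refine Relation.ReflTransGen.head (b := List.replicate s'.length 0 ++ (p ++ [a])) ?_ ?_
    · refine ⟨(List.replicate (a :: s').length 0 ++ p) ++ [a], ⟨by simp, ?_⟩, ?_, ?_, ?_⟩
      · have : (p ++ [a]).count 1 ≤ (p ++ a :: s').count 1 := by
          simp [List.count_append, List.count_cons]; try omega
        simpa [List.count_append, List.count_replicate] using le_trans this hc
      · simp; try omega
      · have hlen : (a :: s').length + p.length
            = (List.replicate (a :: s').length (0 : Fin 2) ++ p).length := by simp
        rw [hlen, List.take_left]
      · simp [List.replicate_succ]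
    · have hc' : ((p ++ [a]) ++ s').count 1 ≤ 1 := by
        simpa [List.count_append, List.count_cons] using hc
      have := ih (p ++ [a]) hc'
      have h1 : s'.length + (p ++ [a]).length = (a :: s').length + p.length := by simp; try omega
      rw [h1] at this
      simpa using this

/-- For the language `L11` of binary words containing at most one
`1`, every Rauzy graph is strongly connected, yet the language is not
recurrent: no `w` satisfies `1 w 1 ∈ L11`. -/
theorem stmt11 :
    (∀ n : ℕ, ∀ u ∈ L11, ∀ v ∈ L11, u.length = n → v.length = n →
        Relation.ReflTransGen (RauzyEdge L11 n) u v) ∧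
    (∀ w : List (Fin 2), ([1] ++ w ++ [1]) ∉ L11) := by
  constructor
  · intro n u hu v hv hun hvn
    refine Relation.ReflTransGen.trans (b := List.replicate n 0) ?_ ?_
    · have := L11_reach_zero u hu.2 0
      simpa [hun] using this
    · have := L11_reach_from_zero v [] (by simpa using hv.2)
      simpa [hvn] using this
  · intro w hw
    have := hw.2
    simp [List.count_append, List.count_cons] at this
end

section
/- Let L be a language with eventually constant complexity growth p(n+1) − p(n) = K for all n ≥ n₀, with K ≥ 1. Then for all n ≥ max(n₀, C) where p(n) = Kn + C for n ≥ n₀, any word y ∈ L of length (K+2)n − 1 contains at least one left special word of length n as a factor, provided L is recurrent and aperiodic. -/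
/-- `L` is periodic with some period `p > 0`. -/
def IsPeriodic {A : Type*} (L : Set (List A)) : Prop :=
  ∃ p : ℕ, 0 < p ∧ ∀ w ∈ L, ∀ i : ℕ, i + p < w.length →
    w[i]? = w[i + p]?

/-- Complexity function of `L`. -/
noncomputable def complexity {A : Type*} (L : Set (List A)) (n : ℕ) : ℕ :=
  {w : List A | w ∈ L ∧ w.length = n}.ncard

section Aux

variable {A : Type*} {L : Set (List A)}

/-- Windows of words of `L` are in `L`. -/
lemma mem_of_window (hL : IsLanguage L) {z : List A} (hz : z ∈ L) {t n : ℕ}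
    (hn : 1 ≤ n) (ht : t + n ≤ z.length) : (z.drop t).take n ∈ L := by
  have hlen : ((z.drop t).take n).length = n := by
    rw [List.length_take, List.length_drop]; omega
  refine hL.2.1 z hz _ ?_ (((z.drop t).take_prefix n).isInfix.trans
    (z.drop_suffix t).isInfix)
  intro h
  rw [h] at hlen
  simp at hlen
  omega

lemma uniq_ext {u : List A} {a b : A} (hns : ¬ LeftSpecial L u)
    (ha : a :: u ∈ L) (hb : b :: u ∈ L) : a = b := by
  by_contra h
  exact hns ⟨a, b, h, ha, hb⟩

lemma window_succ {z : List A} {q n : ℕ} (h : q < z.length) :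
    (z.drop q).take (n + 1) = z[q] :: (z.drop (q + 1)).take n := by
  rw [List.drop_eq_getElem_cons h, List.take_succ_cons]

/-- Key propagation step: if a window of `z` coincides with the window of `y`
at position `r ≥ 1` and no window of `y` is left special, then the windows one
step to the left coincide as well. -/
lemma step_lemma (hL : IsLanguage L) {y z : List A} (hz : z ∈ L) (hy : y ∈ L)
    {n : ℕ} (hn : 1 ≤ n)
    (noLS : ∀ t, t + n ≤ y.length → ¬ LeftSpecial L ((y.drop t).take n))
    {q r : ℕ} (hr : 1 ≤ r) (hqz : q + 1 + n ≤ z.length) (hry : r + n ≤ y.length)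
    (heq : (z.drop (q + 1)).take n = (y.drop r).take n) :
    (z.drop q).take n = (y.drop (r - 1)).take n := by
  have hq' : q < z.length := by omega
  have hr' : r - 1 < y.length := by omega
  have h1 : (z.drop q).take (n + 1) = z[q] :: (z.drop (q + 1)).take n :=
    window_succ hq'
  have h2 : (y.drop (r - 1)).take (n + 1) = y[r - 1] :: (y.drop (r - 1 + 1)).take n :=
    window_succ hr'
  rw [show r - 1 + 1 = r by omega] at h2
  have hm1 : (z.drop q).take (n + 1) ∈ L := mem_of_window hL hz (by omega) (by omega)
  have hm2 : (y.drop (r - 1)).take (n + 1) ∈ L := mem_of_window hL hy (by omega) (by omega)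
  rw [h1, heq] at hm1
  rw [h2] at hm2
  have hab : z[q] = y[r - 1] := uniq_ext (noLS r hry) hm1 hm2
  have e1 : ((z.drop q).take (n + 1)).take n = (z.drop q).take n := by
    rw [List.take_take, min_eq_left (by omega)]
  have e2 : ((y.drop (r - 1)).take (n + 1)).take n = (y.drop (r - 1)).take n := by
    rw [List.take_take, min_eq_left (by omega)]
  rw [← e1, ← e2, h1, h2, heq, hab]

/-- If the complexity strictly increases from `n` to `n+1`, there is a left
special word of length `n`. -/
lemma exists_ls [Fintype A] (hL : IsLanguage L) {n : ℕ} (hn : 1 ≤ n)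
    (hlt : complexity L n < complexity L (n + 1)) :
    ∃ u, u ∈ L ∧ u.length = n ∧ LeftSpecial L u := by
  by_contra hcon
  push_neg at hcon
  have hfin : {w : List A | w ∈ L ∧ w.length = n}.Finite :=
    (List.finite_length_eq A n).subset (fun w hw => hw.2)
  have hle : complexity L (n + 1) ≤ complexity L n := by
    refine Set.ncard_le_ncard_of_injOn List.tail ?_ ?_ hfin
    · rintro w ⟨hwL, hwlen⟩
      have hwne : w ≠ [] := by intro h; rw [h] at hwlen; simp at hwlen
      refine ⟨hL.2.1 w hwL _ ?_ (w.tail_suffix.isInfix), by simp [hwlen]⟩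
      intro h
      have := w.length_tail
      rw [h] at this
      simp at this
      omega
    · rintro w ⟨hwL, hwlen⟩ w' ⟨hwL', hwlen'⟩ htl
      have hwne : w ≠ [] := by intro h; rw [h] at hwlen; simp at hwlen
      have hwne' : w' ≠ [] := by intro h; rw [h] at hwlen'; simp at hwlen'
      have e1 : w.head hwne :: w.tail = w := List.cons_head_tail hwne
      have e2 : w'.head hwne' :: w'.tail = w' := List.cons_head_tail hwne'
      have htlL : w.tail ∈ L := by
        refine hL.2.1 w hwL _ ?_ (w.tail_suffix.isInfix)
        intro h
        have := w.length_tail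
        rw [h] at this; simp at this; omega
      have htllen : w.tail.length = n := by
        rw [List.length_tail, hwlen]; omega
      have ha : w.head hwne :: w.tail ∈ L := by rw [e1]; exact hwL
      have hb : w'.head hwne' :: w.tail ∈ L := by rw [htl, e2]; exact hwL'
      have := uniq_ext (hcon w.tail htlL htllen) ha hb
      rw [← e1, ← e2, ← htl, this]
  omega

lemma succ_mod (m p : ℕ) : (m + 1) % p = (m % p + 1) % p := by
  conv_lhs => rw [← Nat.div_add_mod m p, Nat.add_assoc, Nat.mul_add_mod]

end Aux

/-- Let `L` be recurrent and aperiodic with complexity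
`p(m) = K·m + C` for all `m ≥ n₀` (so `p(m+1) - p(m) = K`), `K ≥ 1`.  Then
for all `n ≥ max(n₀, C)`, any word `y ∈ L` of length `(K+2)n - 1` contains a
left special word of length `n` as a factor. -/
theorem stmt12 {A : Type*} [Fintype A] (L : Set (List A)) (hL : IsLanguage L)
    (hrec : IsRecurrent L) (haper : ¬ IsPeriodic L)
    (K C n₀ : ℕ) (hK : 1 ≤ K)
    (hp : ∀ m, n₀ ≤ m → complexity L m = K * m + C)
    (n : ℕ) (hn₀ : n₀ ≤ n) (hnC : C ≤ n)
    (y : List A) (hy : y ∈ L) (hylen : y.length = (K + 2) * n - 1) :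
    ∃ u : List A, u <:+: y ∧ u.length = n ∧ u ∈ L ∧ LeftSpecial L u := by
  classical
  have hn1 : 1 ≤ n := by
    by_contra h
    have hn0 : n = 0 := by omega
    subst hn0
    simp at hylen
    exact hL.1 y hy hylen
  set M := (K + 1) * n with hM
  have hyM : y.length = M + (n - 1) := by
    have h1 : (K + 2) * n = (K + 1) * n + n := by ring
    omega
  have hM1 : n ≤ M := by
    have : 1 * n ≤ (K + 1) * n := Nat.mul_le_mul_right n (by omega)
    omega
  by_cases hinj : Function.Injective (fun t : Fin M => (y.drop t.val).take n)
  · -- injective windows: y contains all of L_n, which contains a LS word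
    set F := fun t : Fin M => (y.drop t.val).take n with hF
    have hwin : ∀ t : Fin M, t.val + n ≤ y.length := by
      intro t; have := t.isLt; omega
    have hsub : Set.range F ⊆ {w : List A | w ∈ L ∧ w.length = n} := by
      rintro _ ⟨t, rfl⟩
      refine ⟨mem_of_window hL hy hn1 (hwin t), ?_⟩
      simp only [hF, List.length_take, List.length_drop]
      have := hwin t; omega
    have hfin : {w : List A | w ∈ L ∧ w.length = n}.Finite :=
      (List.finite_length_eq A n).subset (fun w hw => hw.2)
    have hcard1 : (Set.range F).ncard = M := by
      rw [← Set.image_univ, Set.ncard_image_of_injective _ hinj, Set.ncard_univ]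
      simp
    have hle : M ≤ K * n + C := by
      rw [← hp n hn₀, ← hcard1]
      exact Set.ncard_le_ncard hsub hfin
    have hge : K * n + C ≤ M := by
      have : K * n + n = M := by rw [hM]; ring
      omega
    have heqset : Set.range F = {w : List A | w ∈ L ∧ w.length = n} := by
      refine Set.eq_of_subset_of_ncard_le hsub ?_ hfin
      rw [hcard1]
      have hcompl := hp n hn₀
      unfold complexity at hcompl
      omega
    have hlt : complexity L n < complexity L (n + 1) := by
      rw [hp n hn₀, hp (n + 1) (by omega)]
      have : K * (n + 1) = K * n + K := by ring
      omega
    obtain ⟨u, huL, hulen, huLS⟩ := exists_ls hL hn1 hlt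
    have : u ∈ Set.range F := by rw [heqset]; exact ⟨huL, hulen⟩
    obtain ⟨t, rfl⟩ := this
    exact ⟨F t, ((y.drop t.val).take_prefix n).isInfix.trans
      (y.drop_suffix t.val).isInfix, by
        simp only [hF, List.length_take, List.length_drop]
        have := hwin t; omega, huL, huLS⟩
  · -- non-injective: two equal windows; suppose no LS factor, derive periodicity
    by_contra hcon
    push_neg at hcon
    have noLS : ∀ t, t + n ≤ y.length → ¬ LeftSpecial L ((y.drop t).take n) := by
      intro t ht
      refine hcon _ (((y.drop t).take_prefix n).isInfix.trans
        (y.drop_suffix t).isInfix) ?_ (mem_of_window hL hy hn1 ht)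
      rw [List.length_take, List.length_drop]; omega
    rw [Function.not_injective_iff] at hinj
    obtain ⟨t1, t2, hft, hne⟩ := hinj
    -- get i < j with equal windows
    obtain ⟨i, j, hij, hjM, hfij⟩ :
        ∃ i j : ℕ, i < j ∧ j < M ∧ (y.drop i).take n = (y.drop j).take n := by
      rcases lt_or_gt_of_ne (Fin.val_ne_of_ne hne) with h | h
      · exact ⟨t1.val, t2.val, h, t2.isLt, hft⟩
      · exact ⟨t2.val, t1.val, h, t1.isLt, hft.symm⟩
    set p := j - i with hpdef
    have hp1 : 1 ≤ p := by omega
    -- propagate to the left inside y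
    have prop : ∀ d, d ≤ i → (y.drop (i - d)).take n = (y.drop (i - d + p)).take n := by
      intro d
      induction d with
      | zero =>
        intro _
        rw [Nat.sub_zero, show i + p = j by omega]
        exact hfij
      | succ d ih =>
        intro hd
        have h1 := ih (by omega)
        have h2 : (y.drop (i - (d + 1) + 1)).take n = (y.drop (i - d + p)).take n := by
          rw [show i - (d + 1) + 1 = i - d by omega]; exact h1
        have h3 := step_lemma hL hy hy hn1 noLS (by omega : 1 ≤ i - d + p)
          (by omega : i - (d + 1) + 1 + n ≤ y.length)
          (by omega : i - d + p + n ≤ y.length) h2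
        rw [show i - d + p - 1 = i - (d + 1) + p by omega] at h3
        exact h3
    have h0p : (y.drop 0).take n = (y.drop p).take n := by
      have := prop i le_rfl
      rwa [Nat.sub_self, Nat.zero_add] at this
    -- now derive periodicity of L
    apply haper
    refine ⟨p, by omega, ?_⟩
    intro w hw i_ hi_
    obtain ⟨s, hsL, hzL⟩ := hrec w hw y hy
    set z := w ++ s ++ y with hzdef
    set off := (w ++ s).length with hoffdef
    have hdropz : z.drop off = y := List.drop_left (l₁ := w ++ s) (l₂ := y)
    have hzlen : z.length = off + y.length := by
      rw [hzdef, List.length_append]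
    have hwoff : w.length ≤ off := by
      rw [hoffdef, List.length_append]; omega
    have claim : ∀ m, m ≤ off →
        (z.drop (off - m)).take n = (y.drop (p - m % p)).take n := by
      intro m
      induction m with
      | zero =>
        intro _
        rw [Nat.sub_zero, hdropz, Nat.zero_mod, Nat.sub_zero]
        simpa using h0p
      | succ m ih =>
        intro hm
        have hIH := ih (by omega)
        have hmp : m % p < p := Nat.mod_lt m (by omega)
        set r := p - m % p with hrdef
        have hr1 : 1 ≤ r := by omega
        have hrp : r ≤ p := by omega
        have h2 : (z.drop (off - (m + 1) + 1)).take n = (y.drop r).take n := by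
          rw [show off - (m + 1) + 1 = off - m by omega]; exact hIH
        have h3 := step_lemma hL hzL hy hn1 noLS hr1
          (by omega : off - (m + 1) + 1 + n ≤ z.length)
          (by omega : r + n ≤ y.length) h2
        have hmod := succ_mod m p
        by_cases hc : m % p + 1 = p
        · have h4 : (m + 1) % p = 0 := by
            rw [hmod, hc, Nat.mod_self]
          rw [h4, Nat.sub_zero]
          have h5 : r - 1 = 0 := by omega
          rw [h5] at h3
          rw [h3]
          simpa using h0p
        · have h4 : (m + 1) % p = m % p + 1 := by
            rw [hmod, Nat.mod_eq_of_lt (by omega)]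
          rw [h4]
          rw [show p - (m % p + 1) = r - 1 by omega]
          exact h3
    -- extract letters
    have letters : ∀ m, m ≤ off → z[off - m]? = y[p - m % p]? := by
      intro m hm
      have hcl := claim m hm
      have e1 : z[off - m]? = ((z.drop (off - m)).take n)[0]? := by
        rw [List.getElem?_take_of_lt (by omega : 0 < n), List.getElem?_drop, Nat.add_zero]
      have e2 : y[p - m % p]? = ((y.drop (p - m % p)).take n)[0]? := by
        rw [List.getElem?_take_of_lt (by omega : 0 < n), List.getElem?_drop, Nat.add_zero]
      rw [e1, e2, hcl]
    have hm1le : i_ + p ≤ off := by omega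
    have l1 := letters (off - i_) (by omega)
    have l2 := letters (off - (i_ + p)) (by omega)
    rw [show off - (off - i_) = i_ by omega] at l1
    rw [show off - (off - (i_ + p)) = i_ + p by omega] at l2
    have hmodeq : (off - i_) % p = (off - (i_ + p)) % p := by
      rw [show off - i_ = off - (i_ + p) + p by omega, Nat.add_mod_right]
    have hzz : z[i_]? = z[i_ + p]? := by
      rw [l1, l2, hmodeq]
    have hzw : z = w ++ (s ++ y) := by rw [hzdef, List.append_assoc]
    rw [hzw] at hzz
    rw [List.getElem?_append_left (by omega : i_ < w.length),
        List.getElem?_append_left (by omega : i_ + p < w.length)] at hzz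
    exact hzz
end

section
/- Let w' be a factor of a finite word w and let x be an infinite sequence over a finite alphabet. Then the upper block-density satisfies D(w', x) ≥ (|w'| / (2|w|)) · D(w, x), where D(u,x) = limsup_{N→∞} (1/N) Σ_{j=1}^N r(u,x,j), and r(u,x,j) = 1 if u occurs in x starting at some position k with (j−1)(K+1)|u| < k ≤ j(K+1)|u| and 0 otherwise, for a fixed constant K ≥ 1. -/
open Classical

/-- The upper block-density of a word `u` in a sequence `x`: partition the
positions of `x` into consecutive blocks of length `(K+1)|u|`, let
`r(u,x,j) = 1` iff `u` occurs in `x` starting at a position inside the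
(0-indexed) `j`-th block, and take `limsup_N (1/N) Σ_{j<N} r(u,x,j)`. -/
noncomputable def blockDensity {A : Type*} (K : ℕ) (u : List A) (x : ℕ → A) : ℝ :=
  Filter.limsup (fun N : ℕ =>
    ((Finset.filter (fun j =>
        ∃ k : ℕ, j * ((K + 1) * u.length) ≤ k ∧
          k < (j + 1) * ((K + 1) * u.length) ∧
          ∀ m < u.length, u[m]? = some (x (k + m)))
      (Finset.range N)).card : ℝ) / (N : ℝ)) Filter.atTop


lemma occ_factor {A : Type*} {w w' : List A} (hfac : w' <:+: w) :
    ∃ s, s + w'.length ≤ w.length ∧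
      ∀ (x : ℕ → A) (k : ℕ), (∀ m < w.length, w[m]? = some (x (k + m))) →
        ∀ m < w'.length, w'[m]? = some (x (k + s + m)) := by
  obtain ⟨p, t, rfl⟩ := hfac
  refine ⟨p.length, by simp [List.length_append], ?_⟩
  intro x k h m hm
  have h1 : (p ++ w' ++ t)[p.length + m]? = w'[m]? := by
    rw [List.append_assoc, List.getElem?_append_right (by omega)]
    simp [List.getElem?_append_left hm]
  have h2 := h (p.length + m) (by simp [List.length_append]; omega)
  rw [h1] at h2
  rw [h2]
  ring_nf

lemma count_key {A : Type*} (K : ℕ) (w w' : List A) (x : ℕ → A)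
    (hfac : w' <:+: w) (hn' : 0 < w'.length) (N : ℕ) :
    (Finset.filter (fun j => ∃ k : ℕ, j * ((K + 1) * w.length) ≤ k ∧
          k < (j + 1) * ((K + 1) * w.length) ∧
          ∀ m < w.length, w[m]? = some (x (k + m))) (Finset.range N)).card ≤
      2 * (Finset.filter (fun j => ∃ k : ℕ, j * ((K + 1) * w'.length) ≤ k ∧
          k < (j + 1) * ((K + 1) * w'.length) ∧
          ∀ m < w'.length, w'[m]? = some (x (k + m))) (Finset.range
        ((N * ((K + 1) * w.length) + w.length) / ((K + 1) * w'.length) + 1))).card := by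
  classical
  obtain ⟨s, hs, htr⟩ := occ_factor hfac
  set n := w.length with hn
  set n' := w'.length with hn'e
  have hnn' : n' ≤ n := hfac.length_le
  have hn0 : 0 < n := lt_of_lt_of_le hn' hnn'
  set L := (K + 1) * n with hL
  set L' := (K + 1) * n' with hL'
  have hL'0 : 0 < L' := by positivity
  have hL'L : L' ≤ L := Nat.mul_le_mul_left _ hnn'
  set P : ℕ → Prop := fun j => ∃ k : ℕ, j * L ≤ k ∧ k < (j + 1) * L ∧
      ∀ m < n, w[m]? = some (x (k + m)) with hP
  set M := (N * L + n) / L' + 1 with hM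
  set S : Finset ℕ := Finset.filter P (Finset.range N) with hS
  -- choose witness
  have hwit : ∀ j ∈ S, ∃ k : ℕ, j * L ≤ k ∧ k < (j + 1) * L ∧
      ∀ m < n, w[m]? = some (x (k + m)) := by
    intro j hj
    exact (Finset.mem_filter.mp hj).2
  set kf : ℕ → ℕ := fun j => if h : P j then h.choose else 0 with hkf
  have hkf1 : ∀ j ∈ S, j * L ≤ kf j ∧ kf j < (j + 1) * L ∧
      ∀ m < n, w[m]? = some (x (kf j + m)) := by
    intro j hj
    have h := (Finset.mem_filter.mp hj).2
    simp only [hkf, dif_pos h]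
    exact h.choose_spec
  set f : ℕ → ℕ := fun j => (kf j + s) / L' with hf
  have key := Finset.card_le_mul_card_image (f := f) S 2 ?_
  · refine le_trans key (Nat.mul_le_mul_left 2 (Finset.card_le_card ?_))
    intro b hb
    obtain ⟨j, hj, rfl⟩ := Finset.mem_image.mp hb
    obtain ⟨h1, h2, h3⟩ := hkf1 j hj
    have hjN : j < N := Finset.mem_range.mp (Finset.mem_filter.mp hj).1
    have hks : kf j + s < N * L + n := by
      have : kf j < N * L := lt_of_lt_of_le h2 (Nat.mul_le_mul_right L hjN)
      omega
    refine Finset.mem_filter.mpr ⟨Finset.mem_range.mpr ?_, ?_⟩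
    · have h5 : (kf j + s) / L' ≤ (N * L + n) / L' := Nat.div_le_div_right (le_of_lt hks)
      simp only [hf]
      omega
    · refine ⟨kf j + s, Nat.div_mul_le_self _ _, ?_, ?_⟩
      · have hd1 := Nat.div_add_mod (kf j + s) L'
        have hd2 := Nat.mod_lt (kf j + s) hL'0
        simp only [hf]
        have hexp : ((kf j + s) / L' + 1) * L' = L' * ((kf j + s) / L') + L' := by ring
        omega
      · exact htr x (kf j) h3
  · -- fibers have card ≤ 2
    intro b hb
    set T := Finset.filter (fun j => f j = b) S with hT
    by_cases hne : T.Nonempty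
    · have hmin := T.min'_mem hne
      set m0 := T.min' hne with hm0
      have hsub : T ⊆ Finset.Icc m0 (m0 + 1) := by
        intro j hjT
        have hj1 : m0 ≤ j := Finset.min'_le T j hjT
        rw [Finset.mem_Icc]
        refine ⟨hj1, ?_⟩
        by_contra hc
        push_neg at hc
        have hjj : m0 + 2 ≤ j := by omega
        -- get witnesses for j and m0
        have hjS : j ∈ S := (Finset.mem_filter.mp hjT).1
        have hmS : m0 ∈ S := (Finset.mem_filter.mp hmin).1
        obtain ⟨hj1', hj2', _⟩ := hkf1 j hjS
        obtain ⟨hm1', hm2', _⟩ := hkf1 m0 hmS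
        have hfj : f j = b := (Finset.mem_filter.mp hjT).2
        have hfm : f m0 = b := (Finset.mem_filter.mp hmin).2
        -- both kf j + s and kf m0 + s in [b*L', (b+1)*L')
        have e1 : b * L' ≤ kf m0 + s := by
          rw [← hfm]; exact Nat.div_mul_le_self _ _
        have e2 : kf j + s < (b + 1) * L' := by
          rw [← hfj]
          have hd1 := Nat.div_add_mod (kf j + s) L'
          have hd2 := Nat.mod_lt (kf j + s) hL'0
          simp only [hf]
          have hexp : ((kf j + s) / L' + 1) * L' = L' * ((kf j + s) / L') + L' := by ring
          omega
        -- but kf j ≥ j * L ≥ (m0+2)*L and kf m0 < (m0+1)*L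
        have big : kf m0 + L < kf j := by
          have : (m0 + 2) * L ≤ kf j := le_trans (Nat.mul_le_mul_right L hjj) hj1'
          have hL0 : 0 < L := by positivity
          nlinarith [hm2']
        have hexp : (b + 1) * L' = b * L' + L' := by ring
        omega
      calc T.card ≤ (Finset.Icc m0 (m0 + 1)).card := Finset.card_le_card hsub
        _ = 2 := by rw [Nat.card_Icc]; omega
    · rw [Finset.not_nonempty_iff_eq_empty] at hne
      rw [hne]; simp

open Filter in
lemma limsup_key (g h : ℕ → ℝ) (M : ℕ → ℕ) (c : ℝ)
    (hc0 : 0 < c) (hc1 : c ≤ 1)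
    (hg0 : ∀ N, 0 ≤ g N) (hg1 : ∀ N, g N ≤ 1)
    (hh0 : ∀ N, 0 ≤ h N) (hh1 : ∀ N, h N ≤ 1)
    (hMN : ∀ N, N ≤ M N)
    (t : ℕ → ℝ) (hbound : ∀ N, g N * t N ≤ h (M N)) (ht0 : ∀ N, 0 ≤ t N)
    (htc : ∀ δ' > (0:ℝ), ∀ᶠ N in atTop, c - δ' < t N) :
    c * limsup g atTop ≤ limsup h atTop := by
  have hgcob : IsCoboundedUnder (· ≤ ·) atTop g :=
    isCoboundedUnder_le_of_le atTop hg0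
  have hgbd : IsBoundedUnder (· ≤ ·) atTop g := ⟨1, Filter.eventually_map.mpr
    (Eventually.of_forall hg1)⟩
  have hhbd : IsBoundedUnder (· ≤ ·) atTop h := ⟨1, Filter.eventually_map.mpr
    (Eventually.of_forall hh1)⟩
  set D := limsup g atTop with hD
  have hD1 : D ≤ 1 := limsup_le_of_le hgcob (Eventually.of_forall hg1)
  have hLh0 : 0 ≤ limsup h atTop :=
    le_limsup_of_frequently_le (Eventually.of_forall hh0).frequently hhbd
  rcases le_or_gt D 0 with hD0 | hD0
  · calc c * D ≤ c * 0 := by nlinarith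
      _ = 0 := mul_zero c
      _ ≤ _ := hLh0
  -- main case: D > 0
  refine le_of_forall_pos_le_add (fun ε hε => ?_)
  set δ : ℝ := ε / 2 with hδ
  set δ' : ℝ := min (ε / 2) (c / 2) with hδ'
  have hδ0 : 0 < δ := by positivity
  have hδ'0 : 0 < δ' := by
    apply lt_min <;> positivity
  have hδ'c : δ' ≤ c / 2 := min_le_right _ _
  have hfreq : ∃ᶠ N in atTop, D - δ < g N :=
    frequently_lt_of_lt_limsup hgcob (by linarith)
  have hev : ∀ᶠ N in atTop, c - δ' < t N := htc δ' hδ'0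
  have hfreq2 : ∃ᶠ N in atTop, D - δ < g N ∧ c - δ' < t N := hfreq.and_eventually hev
  have key : ∃ᶠ m in atTop, c * D - ε ≤ h m := by
    rw [frequently_atTop] at hfreq2 ⊢
    intro a
    obtain ⟨N, hNa, hg, ht⟩ := hfreq2 a
    refine ⟨M N, le_trans hNa (hMN N), ?_⟩
    have h1 : (D - δ) * (c - δ') ≤ g N * t N := by
      rcases le_or_gt (D - δ) 0 with h2 | h2
      · have : (D - δ) * (c - δ') ≤ 0 := by nlinarith
        exact le_trans this (mul_nonneg (hg0 N) (ht0 N))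
      · apply mul_le_mul (le_of_lt hg) (le_of_lt ht) (by linarith) (hg0 N)
    have h3 : c * D - ε ≤ (D - δ) * (c - δ') := by
      have hδ'e : δ' ≤ ε / 2 := min_le_left _ _
      nlinarith
    exact le_trans h3 (le_trans h1 (hbound N))
  have := le_limsup_of_frequently_le key hhbd
  linarith

/-- If `w'` is a factor of `w`, then for any sequence `x`,
`D(w', x) ≥ (|w'| / (2|w|)) · D(w, x)`. -/
theorem stmt13 {A : Type*} [Fintype A] (K : ℕ) (hK : 1 ≤ K)
    (w w' : List A) (x : ℕ → A) (hfac : w' <:+: w) :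
    ((w'.length : ℝ) / (2 * (w.length : ℝ))) * blockDensity K w x
      ≤ blockDensity K w' x := by
  classical
  by_cases hw' : w'.length = 0
  · have h0 : blockDensity K w' x = 0 := by
      unfold blockDensity
      have heq : (fun N : ℕ => ((Finset.filter (fun j =>
          ∃ k : ℕ, j * ((K + 1) * w'.length) ≤ k ∧
            k < (j + 1) * ((K + 1) * w'.length) ∧
            ∀ m < w'.length, w'[m]? = some (x (k + m)))
          (Finset.range N)).card : ℝ) / (N : ℝ)) = fun _ => (0:ℝ) := by
        funext N
        rw [Finset.filter_false_of_mem, Finset.card_empty]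
        · simp
        · rintro j _ ⟨k, _, hk, _⟩
          simp [hw'] at hk
      rw [heq, Filter.limsup_const]
    rw [h0, hw']
    simp
  · -- main case
    have hn' : 0 < w'.length := Nat.pos_of_ne_zero hw'
    have hnn' : w'.length ≤ w.length := hfac.length_le
    have hn : 0 < w.length := lt_of_lt_of_le hn' hnn'
    set n : ℕ := w.length with hndef
    set n' : ℕ := w'.length with hn'def
    set L : ℕ := (K + 1) * n with hLdef
    set L' : ℕ := (K + 1) * n' with hL'def
    have hL'0 : 0 < L' := by positivity
    have hL0 : 0 < L := by positivity
    have hL'L : L' ≤ L := Nat.mul_le_mul_left _ hnn'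
    set Mf : ℕ → ℕ := fun N => (N * L + n) / L' + 1 with hMf
    unfold blockDensity
    refine limsup_key _ _ Mf ((n' : ℝ) / (2 * (n : ℝ))) ?_ ?_ ?_ ?_ ?_ ?_ ?_
      (fun N => (N : ℝ) / (2 * (Mf N : ℝ))) ?_ ?_ ?_
    · positivity
    · rw [div_le_one (by positivity)]
      have : (n' : ℝ) ≤ (n : ℝ) := by exact_mod_cast hnn'
      linarith
    · intro N; positivity
    · intro N
      rcases Nat.eq_zero_or_pos N with rfl | hN
      · simp
      · rw [div_le_one (by exact_mod_cast hN)]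
        exact_mod_cast le_trans (Finset.card_filter_le _ _) (le_of_eq (Finset.card_range N))
    · intro N; positivity
    · intro N
      rcases Nat.eq_zero_or_pos N with rfl | hN
      · simp
      · rw [div_le_one (by exact_mod_cast hN)]
        exact_mod_cast le_trans (Finset.card_filter_le _ _) (le_of_eq (Finset.card_range N))
    · intro N
      have h1 : N * L' ≤ N * L := Nat.mul_le_mul_left N hL'L
      have h2 : N * L' / L' ≤ (N * L + n) / L' := Nat.div_le_div_right (by omega)
      rw [Nat.mul_div_cancel N hL'0] at h2
      simp only [hMf]
      omega
    · -- hbound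
      intro N
      have hcount := count_key K w w' x hfac hn' N
      rcases Nat.eq_zero_or_pos N with rfl | hN
      · simp only [Nat.cast_zero, Finset.range_zero, Finset.filter_empty,
          Finset.card_empty, zero_div, zero_mul]
        positivity
      · have hNne : (N : ℝ) ≠ 0 := by exact_mod_cast hN.ne'
        have hM0 : (0 : ℝ) < (Mf N : ℝ) := by
          have : 0 < Mf N := Nat.succ_pos _
          exact_mod_cast this
        set C : ℕ := (Finset.filter (fun j =>
            ∃ k : ℕ, j * ((K + 1) * w.length) ≤ k ∧
              k < (j + 1) * ((K + 1) * w.length) ∧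
              ∀ m < w.length, w[m]? = some (x (k + m))) (Finset.range N)).card with hC
        set C' : ℕ := (Finset.filter (fun j =>
            ∃ k : ℕ, j * ((K + 1) * w'.length) ≤ k ∧
              k < (j + 1) * ((K + 1) * w'.length) ∧
              ∀ m < w'.length, w'[m]? = some (x (k + m)))
            (Finset.range (Mf N))).card with hC'
        have hcount' : (C : ℝ) ≤ 2 * (C' : ℝ) := by exact_mod_cast hcount
        calc (C : ℝ) / N * ((N : ℝ) / (2 * (Mf N : ℝ)))
            = (C : ℝ) / (2 * (Mf N : ℝ)) := by field_simp
          _ ≤ (2 * (C' : ℝ)) / (2 * (Mf N : ℝ)) := by gcongr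
          _ = (C' : ℝ) / (Mf N : ℝ) := by
              rw [mul_div_mul_left _ _ (two_ne_zero)]
    · intro N; positivity
    · -- tendsto part
      intro δ' hδ'
      have hL'r : (0:ℝ) < (L' : ℝ) := by exact_mod_cast hL'0
      have hLr : (0:ℝ) < (L : ℝ) := by exact_mod_cast hL0
      set q : ℕ → ℝ := fun N =>
        (2 * (L:ℝ) / (L':ℝ) + (2 * (n:ℝ) / (L':ℝ) + 2) * (1 / (N:ℝ)))⁻¹ with hq
      have hden : Filter.Tendsto (fun N : ℕ =>
          2 * (L:ℝ) / (L':ℝ) + (2 * (n:ℝ) / (L':ℝ) + 2) * (1 / (N:ℝ)))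
          Filter.atTop (nhds (2 * (L:ℝ) / (L':ℝ) + (2 * (n:ℝ) / (L':ℝ) + 2) * 0)) :=
        tendsto_const_nhds.add (tendsto_const_nhds.mul tendsto_one_div_atTop_nhds_zero_nat)
      have hden0 : 2 * (L:ℝ) / (L':ℝ) + (2 * (n:ℝ) / (L':ℝ) + 2) * 0 ≠ 0 := by
        simp only [mul_zero, add_zero]
        positivity
      have hqq : Filter.Tendsto q Filter.atTop (nhds ((n' : ℝ) / (2 * (n : ℝ)))) := by
        have := hden.inv₀ hden0
        have hval : (2 * (L:ℝ) / (L':ℝ) + (2 * (n:ℝ) / (L':ℝ) + 2) * 0)⁻¹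
            = (n' : ℝ) / (2 * (n : ℝ)) := by
          simp only [mul_zero, add_zero, hLdef, hL'def]
          have hnr : (0:ℝ) < (n:ℝ) := by exact_mod_cast hn
          have hn'r : (0:ℝ) < (n':ℝ) := by exact_mod_cast hn'
          have hKr : (0:ℝ) < ((K:ℝ) + 1) := by positivity
          push_cast
          rw [inv_div, div_eq_div_iff (by positivity) (by positivity)]
          ring
        rw [hval] at this
        exact this
      -- eventually q N > c - δ'
      have hev : ∀ᶠ N in Filter.atTop, (n' : ℝ) / (2 * (n : ℝ)) - δ' < q N :=
        hqq.eventually (eventually_gt_nhds (by linarith))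
      filter_upwards [hev, Filter.eventually_ge_atTop 1] with N hqN hN1
      refine lt_of_lt_of_le hqN ?_
      -- q N ≤ N / (2 * Mf N)
      have hNr : (0:ℝ) < (N:ℝ) := by exact_mod_cast hN1
      have hMcast : (Mf N : ℝ) ≤ ((N:ℝ) * (L:ℝ) + (n:ℝ)) / (L':ℝ) + 1 := by
        have h1 : ((((N * L + n) / L' : ℕ)) : ℝ) ≤ ((N:ℝ) * (L:ℝ) + (n:ℝ)) / (L':ℝ) := by
          refine le_trans Nat.cast_div_le ?_
          push_cast
          exact le_of_eq rfl
        have h2 : (Mf N : ℝ) = (((N * L + n) / L' : ℕ) : ℝ) + 1 := by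
          simp only [hMf]; push_cast; ring
        rw [h2]; linarith
      have hq_eq : q N = (N:ℝ) / (2 * (((N:ℝ) * (L:ℝ) + (n:ℝ)) / (L':ℝ) + 1)) := by
        simp only [hq]
        rw [inv_eq_iff_eq_inv, inv_div]
        field_simp
        ring
      rw [hq_eq]
      have hM0 : (0 : ℝ) < (Mf N : ℝ) := by
        have : 0 < Mf N := Nat.succ_pos _
        exact_mod_cast this
      gcongr
      all_goals first | positivity | linarith
end

section
/- Let w ∈ L have length n and suppose B = {z⁽¹⁾, ..., z⁽ᵖ⁾} is a set of words of common length m such that between any two occurrences of w in any word of L, at least one z⁽ⁱ⁾ begins. Then for any x ∈ X there exists j ∈ {1,...,p} with D(z⁽ʲ⁾, x) ≥ (1 / (p(1 + 3n/m))) · D(w, x), where D is the upper block-density with block parameter K+1. -/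
open Classical

/-- The left shift on one-sided sequences. -/
def shiftMap {A : Type*} (x : ℕ → A) : ℕ → A := fun i => x (i + 1)

/-- A subshift: a nonempty closed shift-invariant subset of `A^ℕ`. -/
def IsSubshift {A : Type*} [TopologicalSpace A] (X : Set (ℕ → A)) : Prop :=
  X.Nonempty ∧ IsClosed X ∧ shiftMap '' X = X

/-- The language of a subshift. -/
def lang {A : Type*} (X : Set (ℕ → A)) : Set (List A) :=
  {w : List A | w ≠ [] ∧ ∃ x ∈ X, ∃ i : ℕ,
    w = List.ofFn (fun j : Fin w.length => x (i + (j : ℕ)))}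

set_option maxHeartbeats 2000000

section Aux

open Filter

private lemma aux_limsup_comp_le (u : ℕ → ℝ) (M : ℕ → ℕ)
    (hM : Tendsto M atTop atTop) (h0 : ∀ N, 0 ≤ u N) (h1 : ∀ N, u N ≤ 1) :
    limsup (fun N => u (M N)) atTop ≤ limsup u atTop := by
  have : (fun N => u (M N)) = u ∘ M := rfl
  rw [this, Filter.limsup_comp]
  haveI : (Filter.map M atTop).NeBot := by
    exact Filter.map_neBot
  refine Filter.limsup_le_limsup_of_le hM ?_ ?_
  · exact Filter.isCoboundedUnder_le_of_le _ h0
  · exact Filter.isBoundedUnder_of ⟨1, h1⟩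

private lemma aux_limsup_sum_le {ι : Type*} (s : Finset ι) (u : ι → ℕ → ℝ)
    (h0 : ∀ i N, 0 ≤ u i N) (h1 : ∀ i N, u i N ≤ 1) :
    limsup (fun N => ∑ i ∈ s, u i N) atTop ≤ ∑ i ∈ s, limsup (u i) atTop := by
  classical
  induction s using Finset.induction_on with
  | empty => simp
  | @insert a s ha ih =>
    have hrw : (fun N => ∑ i ∈ insert a s, u i N)
        = fun N => u a N + ∑ i ∈ s, u i N := by
      funext N; rw [Finset.sum_insert ha]
    rw [hrw, Finset.sum_insert ha]
    have hadd : limsup (fun N => u a N + ∑ i ∈ s, u i N) atTop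
        ≤ limsup (u a) atTop + limsup (fun N => ∑ i ∈ s, u i N) atTop := by
      have := limsup_add_le (f := atTop) (u := u a) (v := fun N => ∑ i ∈ s, u i N)
        (Filter.isBoundedUnder_of ⟨0, fun N => h0 a N⟩)
        (Filter.isBoundedUnder_of ⟨1, fun N => h1 a N⟩)
        (Filter.isCoboundedUnder_le_of_le _
          (fun N => Finset.sum_nonneg (fun i _ => h0 i N)))
        (Filter.isBoundedUnder_of ⟨(s.card : ℝ), fun N => by
          calc ∑ i ∈ s, u i N ≤ ∑ _i ∈ s, (1:ℝ) :=
                Finset.sum_le_sum (fun i _ => h1 i N)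
            _ = s.card := by simp⟩)
      exact this
    calc limsup (fun N => u a N + ∑ i ∈ s, u i N) atTop
        ≤ limsup (u a) atTop + limsup (fun N => ∑ i ∈ s, u i N) atTop := hadd
      _ ≤ limsup (u a) atTop + ∑ i ∈ s, limsup (u i) atTop := by
          exact add_le_add le_rfl ih


end Aux

/-- Suppose `w ∈ L` has length `n`, and `B = {z 0, ..., z (p-1)}`
is a set of words of common length `m` such that in any word of `L`, between
any two occurrences of `w` some `z i` begins.  Then for any `x ∈ X` there is
`i` with `D(z i, x) ≥ D(w, x) / (p (1 + 3n/m))`. -/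
theorem stmt14 {A : Type*} [Fintype A] [TopologicalSpace A] [DiscreteTopology A]
    (K : ℕ) (X : Set (ℕ → A)) (hX : IsSubshift X)
    (w : List A) (n : ℕ) (hw : w ∈ lang X) (hwn : w.length = n)
    (p m : ℕ) (hp : 0 < p) (hm : 0 < m)
    (z : Fin p → List A) (hz : ∀ i, z i ∈ lang X) (hzm : ∀ i, (z i).length = m)
    (hB : ∀ y ∈ lang X, ∀ j j' : ℕ, j < j' → j' + max n m ≤ y.length →
      (∀ t < n, w[t]? = y[j + t]?) →
      (∀ t < n, w[t]? = y[j' + t]?) →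
      ∃ i : Fin p, ∃ k : ℕ, j ≤ k ∧ k < j' ∧
        ∀ t < m, (z i)[t]? = y[k + t]?)
    (x : ℕ → A) (hx : x ∈ X) :
    ∃ i : Fin p,
      (1 / ((p : ℝ) * (1 + 3 * (n : ℝ) / (m : ℝ)))) * blockDensity K w x
        ≤ blockDensity K (z i) x := by
  have hwne : w ≠ [] := hw.1
  have hn1 : 0 < n := hwn ▸ List.length_pos_iff.mpr hwne
  -- the counting function
  set Q : List A → ℕ → Prop := fun u j => ∃ k : ℕ, j * ((K + 1) * u.length) ≤ k ∧
      k < (j + 1) * ((K + 1) * u.length) ∧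
      ∀ t < u.length, u[t]? = some (x (k + t)) with hQ
  set cnt : List A → ℕ → ℕ :=
    fun u N => (Finset.filter (Q u) (Finset.range N)).card with hcnt
  have hbd : ∀ u : List A,
      blockDensity K u x = Filter.limsup (fun N => (cnt u N : ℝ)/N) Filter.atTop := by
    intro u; rfl
  set M : ℕ → ℕ := fun N => N * n / m + 1 with hM
  -- KEY combinatorial estimate
  have key : ∀ N : ℕ,
      n * cnt w N ≤ (m + 3 * n) * (∑ i : Fin p, cnt (z i) (M N)) + n := by
    intro N
    by_cases hCn : (Finset.filter (Q w) (Finset.range N)).Nonempty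
    case neg =>
      have h0 : cnt w N = 0 := by
        rw [hcnt]
        simp [Finset.not_nonempty_iff_eq_empty.mp hCn]
      rw [h0]
      simp
    case pos =>
    set C := Finset.filter (Q w) (Finset.range N) with hC
    set J := C.max' hCn with hJ
    have hwQ : ∀ j ∈ C, Q w j := fun j hj => (Finset.mem_filter.mp hj).2
    have hQun : ∀ j, Q w j ↔ ∃ k : ℕ, j * ((K + 1) * n) ≤ k ∧
        k < (j + 1) * ((K + 1) * n) ∧ ∀ t < n, w[t]? = some (x (k + t)) := by
      intro j; simp only [hQ]; rw [hwn]
    -- choose occurrence positions k j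
    have hkex : ∀ j : ℕ, ∃ k : ℕ, j ∈ C → (j * ((K+1)*n) ≤ k ∧
        k < (j+1) * ((K+1)*n) ∧ ∀ t < n, w[t]? = some (x (k + t))) := by
      intro j
      by_cases hj : j ∈ C
      · obtain ⟨k, hk⟩ := (hQun j).mp (hwQ j hj)
        exact ⟨k, fun _ => hk⟩
      · exact ⟨0, fun h => absurd h hj⟩
    choose k hk using hkex
    have klb : ∀ j ∈ C, j * ((K+1)*n) ≤ k j := fun j hj => (hk j hj).1
    have kub : ∀ j ∈ C, k j < (j+1) * ((K+1)*n) := fun j hj => (hk j hj).2.1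
    have kmono : ∀ j ∈ C, ∀ j' ∈ C, j < j' → k j < k j' := by
      intro j hj j' hj' hlt
      calc k j < (j+1) * ((K+1)*n) := kub j hj
        _ ≤ j' * ((K+1)*n) := Nat.mul_le_mul_right _ hlt
        _ ≤ k j' := klb j' hj'
    have kmono' : ∀ j ∈ C, ∀ j' ∈ C, j ≤ j' → k j ≤ k j' := by
      intro j hj j' hj' hle
      rcases eq_or_lt_of_le hle with h | h
      · rw [h]
      · exact (kmono j hj j' hj' h).le
    have hmemN : ∀ j ∈ C, j < N := fun j hj =>
      Finset.mem_range.mp (Finset.mem_filter.mp hj).1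
    -- the prefix word y
    set T := N * ((K+1)*n) + max n m with hT
    set y : List A := List.ofFn (fun t : Fin T => x t) with hy
    have hyT : y.length = T := by rw [hy, List.length_ofFn]
    have hyget : ∀ t, t < T → y[t]? = some (x t) := by
      intro t ht
      rw [hy]
      simp [List.getElem?_ofFn, ht]
    have hylang : y ∈ lang X := by
      have hTpos : 0 < T := by
        have : n ≤ max n m := le_max_left _ _
        omega
      constructor
      · intro h
        rw [h] at hyT
        simp at hyT
        omega
      · refine ⟨x, hx, 0, ?_⟩
        apply List.ext_getElem?
        intro t
        by_cases ht : t < T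
        · have ht' : t < y.length := by rw [hyT]; exact ht
          rw [hyget t ht]
          simp [List.getElem?_ofFn, ht']
        · have ht' : ¬ t < y.length := by rw [hyT]; exact ht
          have h1 : y[t]? = none := List.getElem?_eq_none (by omega)
          rw [h1]
          simp [List.getElem?_ofFn, ht']
    -- occurrences of w inside y
    have occy : ∀ j ∈ C, ∀ t < n, w[t]? = y[k j + t]? := by
      intro j hj t ht
      rw [(hk j hj).2.2 t ht]
      refine (hyget (k j + t) ?_).symm
      have h1 := kub j hj
      have h2 : (j+1) * ((K+1)*n) ≤ N * ((K+1)*n) :=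
        Nat.mul_le_mul_right _ (hmemN j hj)
      have h3 : n ≤ max n m := le_max_left _ _
      omega
    -- choose in-between occurrences of some z i
    have hzex : ∀ j, ∃ (i : Fin p) (q : ℕ), j ∈ C.erase J →
        (k j ≤ q ∧ (∃ j' ∈ C, j < j' ∧ q < k j' ∧ ∀ a ∈ C, j < a → j' ≤ a) ∧
          ∀ t < m, (z i)[t]? = some (x (q + t))) := by
      intro j
      by_cases hj : j ∈ C.erase J
      case neg => exact ⟨⟨0, hp⟩, 0, fun h => absurd h hj⟩
      case pos =>
        obtain ⟨hne, hjC⟩ := Finset.mem_erase.mp hj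
        have hfil : (C.filter (fun a => j < a)).Nonempty :=
          ⟨J, Finset.mem_filter.mpr ⟨C.max'_mem hCn,
            lt_of_le_of_ne (C.le_max' j hjC) hne⟩⟩
        set j' := (C.filter (fun a => j < a)).min' hfil with hj'def
        have hj'mem0 := (C.filter (fun a => j < a)).min'_mem hfil
        have hj'mem : j' ∈ C := (Finset.mem_filter.mp hj'mem0).1
        have hjj' : j < j' := (Finset.mem_filter.mp hj'mem0).2
        have hj'min : ∀ a ∈ C, j < a → j' ≤ a := fun a ha hlt =>
          Finset.min'_le _ a (Finset.mem_filter.mpr ⟨ha, hlt⟩)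
        have hkk : k j < k j' := kmono j hjC j' hj'mem hjj'
        have hkub : k j' < N * ((K+1)*n) :=
          lt_of_lt_of_le (kub j' hj'mem) (Nat.mul_le_mul_right _ (hmemN j' hj'mem))
        have hlen : k j' + max n m ≤ y.length := by rw [hyT]; omega
        obtain ⟨i, q, hq1, hq2, hq3⟩ :=
          hB y hylang (k j) (k j') hkk hlen (occy j hjC) (occy j' hj'mem)
        refine ⟨i, q, fun _ => ⟨hq1, ⟨j', hj'mem, hjj', hq2, hj'min⟩, ?_⟩⟩
        intro t ht
        rw [hq3 t ht]
        refine hyget (q + t) ?_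
        have : m ≤ max n m := le_max_right _ _
        omega
    choose zi q hq using hzex
    have hLzpos : 0 < (K+1)*m := by positivity
    -- each chosen z-occurrence gives a good z-block below M N
    have hblk : ∀ j ∈ C.erase J,
        Q (z (zi j)) (q j / ((K+1)*m)) ∧ q j / ((K+1)*m) < M N := by
      intro j hj
      obtain ⟨hq1, ⟨j', hj'C, hjj', hq2, hmin⟩, hq3⟩ := hq j hj
      constructor
      · simp only [hQ, hzm]
        refine ⟨q j, Nat.div_mul_le_self _ _, ?_, hq3⟩
        exact (Nat.div_lt_iff_lt_mul hLzpos).mp (Nat.lt_succ_self _)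
      · have hq4 : q j < N * ((K+1)*n) := by
          have h1 : k j' < N * ((K+1)*n) :=
            lt_of_lt_of_le (kub j' hj'C) (Nat.mul_le_mul_right _ (hmemN j' hj'C))
          omega
        rw [hM]
        rw [Nat.div_lt_iff_lt_mul hLzpos]
        have h1 : N*n < (N*n/m + 1) * m :=
          (Nat.div_lt_iff_lt_mul hm).mp (Nat.lt_succ_self _)
        calc q j < N * ((K+1)*n) := hq4
          _ = (N*n) * (K+1) := by ring
          _ ≤ ((N*n/m + 1) * m) * (K+1) := Nat.mul_le_mul_right _ h1.le
          _ = (N*n/m + 1) * ((K+1)*m) := by ring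
    set E := C.erase J with hE
    set F : ℕ → Fin p × ℕ := fun j => (zi j, q j / ((K+1)*m)) with hF
    have hmaps : ∀ j ∈ E, F j ∈
        (Finset.univ : Finset (Fin p)) ×ˢ Finset.range (M N) := by
      intro j hj
      rw [hF, Finset.mem_product]
      exact ⟨Finset.mem_univ _, Finset.mem_range.mpr (hblk j hj).2⟩
    have hcard := Finset.card_eq_sum_card_fiberwise hmaps
    -- fiber bound
    have hfib : ∀ c ∈ (Finset.univ : Finset (Fin p)) ×ˢ Finset.range (M N),
        n * (E.filter (fun j => F j = c)).card
          ≤ (if Q (z c.1) c.2 then (m + 3*n) else 0) := by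
      intro c _
      by_cases hne : (E.filter (fun j => F j = c)).Nonempty
      case neg =>
        rw [Finset.not_nonempty_iff_eq_empty.mp hne]
        simp
      case pos =>
        obtain ⟨j0, hj0⟩ := hne
        have hj0E : j0 ∈ E := (Finset.mem_filter.mp hj0).1
        have hFj0 : F j0 = c := (Finset.mem_filter.mp hj0).2
        have hQc : Q (z c.1) c.2 := by
          rw [← hFj0]
          exact (hblk j0 hj0E).1
        rw [if_pos hQc]
        set fib := E.filter (fun j => F j = c) with hfibdef
        have hfibne : fib.Nonempty := ⟨j0, hj0⟩
        set jm := fib.min' hfibne with hjmdef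
        set b := c.2 with hb
        set l := b * m / n with hl
        have hsub : fib ⊆ insert jm (Finset.Icc l (l + (m+n)/n)) := by
          intro j hjf
          by_cases hjjm : j = jm
          · rw [hjjm]; exact Finset.mem_insert_self _ _
          · rw [Finset.mem_insert]; right
            have hjE : j ∈ E := (Finset.mem_filter.mp hjf).1
            have hjC : j ∈ C := (Finset.mem_erase.mp hjE).2
            have hjmfib : jm ∈ fib := fib.min'_mem hfibne
            have hjmE : jm ∈ E := (Finset.mem_filter.mp hjmfib).1
            have hjmC : jm ∈ C := (Finset.mem_erase.mp hjmE).2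
            have hjmlt : jm < j :=
              lt_of_le_of_ne (fib.min'_le j hjf) (fun h => hjjm h.symm)
            obtain ⟨hq1m, ⟨j', hj'C, hjmj', hq2m, hminm⟩, -⟩ := hq jm hjmE
            have hFj : F j = c := (Finset.mem_filter.mp hjf).2
            have hFjm : F jm = c := (Finset.mem_filter.mp hjmfib).2
            have hbm : q jm / ((K+1)*m) = b := congrArg Prod.snd hFjm
            have hbj : q j / ((K+1)*m) = b := congrArg Prod.snd hFj
            obtain ⟨hq1j, -, -⟩ := hq j hjE
            -- upper bound for j
            have hup : j * ((K+1)*n) < (b+1) * ((K+1)*m) := by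
              have h1 := klb j hjC
              have h2 : q j < (b+1)*((K+1)*m) := by
                rw [← hbj]
                exact (Nat.div_lt_iff_lt_mul hLzpos).mp (Nat.lt_succ_self _)
              omega
            -- lower bound for j
            have hlow : b * ((K+1)*m) < (j+1) * ((K+1)*n) := by
              have h1 : b*((K+1)*m) ≤ q jm := by
                rw [← hbm]; exact Nat.div_mul_le_self _ _
              have h2 : j' ≤ j := hminm j hjC hjmlt
              have h3 : k j' ≤ k j := kmono' j' hj'C j hjC h2
              have h4 := kub j hjC
              omega
            have hup' : j * n < (b+1) * m := by
              have h : (K+1) * (j*n) < (K+1) * ((b+1)*m) := by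
                calc (K+1)*(j*n) = j*((K+1)*n) := by ring
                  _ < (b+1)*((K+1)*m) := hup
                  _ = (K+1)*((b+1)*m) := by ring
              exact Nat.lt_of_mul_lt_mul_left h
            have hlow' : b * m < (j+1) * n := by
              have h : (K+1) * (b*m) < (K+1) * ((j+1)*n) := by
                calc (K+1)*(b*m) = b*((K+1)*m) := by ring
                  _ < (j+1)*((K+1)*n) := hlow
                  _ = (K+1)*((j+1)*n) := by ring
              exact Nat.lt_of_mul_lt_mul_left h
            have h5 : l * n ≤ b*m := Nat.div_mul_le_self _ _
            have h6 : b*m < (l+1) * n :=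
              (Nat.div_lt_iff_lt_mul hn1).mp (Nat.lt_succ_self _)
            have hlj : l ≤ j := by
              have h7 : l * n < (j+1) * n := lt_of_le_of_lt h5 hlow'
              have h8 : l < j + 1 := Nat.lt_of_mul_lt_mul_right h7
              omega
            have hju : j ≤ l + (m+n)/n := by
              have h7 : (j - l) * n = j*n - l*n := Nat.sub_mul j l n
              have h8 : (j - l) * n ≤ m + n := by
                have h6' : b*m < l*n + n := by
                  calc b*m < (l+1)*n := h6
                    _ = l*n + n := by ring
                have hup'' : j*n < b*m + m := by
                  calc j*n < (b+1)*m := hup'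
                    _ = b*m + m := by ring
                omega
              have h9 : j - l ≤ (m+n)/n := (Nat.le_div_iff_mul_le hn1).mpr h8
              omega
            exact Finset.mem_Icc.mpr ⟨hlj, hju⟩
        have hdivle : n * ((m+n)/n) ≤ m + n := by
          rw [Nat.mul_comm]
          exact Nat.div_mul_le_self _ _
        calc n * fib.card
            ≤ n * (insert jm (Finset.Icc l (l + (m+n)/n))).card :=
              Nat.mul_le_mul_left _ (Finset.card_le_card hsub)
          _ ≤ n * ((Finset.Icc l (l + (m+n)/n)).card + 1) :=
              Nat.mul_le_mul_left _ (Finset.card_insert_le _ _)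
          _ = n * ((m+n)/n + 2) := by
              rw [Nat.card_Icc]
              congr 1
              generalize (m+n)/n = d
              omega
          _ = n * ((m+n)/n) + 2*n := by ring
          _ ≤ (m+n) + 2*n := Nat.add_le_add_right hdivle _
          _ = m + 3*n := by ring
    -- put it together
    have hEcard : E.card + 1 = C.card := Finset.card_erase_add_one (C.max'_mem hCn)
    have main : n * E.card ≤ (m + 3*n) * (∑ i : Fin p, cnt (z i) (M N)) := by
      calc n * E.card
          = n * ∑ c ∈ (Finset.univ : Finset (Fin p)) ×ˢ Finset.range (M N),
              (E.filter (fun j => F j = c)).card := by rw [← hcard]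
        _ = ∑ c ∈ (Finset.univ : Finset (Fin p)) ×ˢ Finset.range (M N),
              n * (E.filter (fun j => F j = c)).card := Finset.mul_sum _ _ _
        _ ≤ ∑ c ∈ (Finset.univ : Finset (Fin p)) ×ˢ Finset.range (M N),
              (if Q (z c.1) c.2 then (m + 3*n) else 0) := Finset.sum_le_sum hfib
        _ = ∑ i : Fin p, ∑ b ∈ Finset.range (M N),
              (if Q (z i) b then (m + 3*n) else 0) := by
            rw [Finset.sum_product]
        _ = ∑ i : Fin p, (m + 3*n) * cnt (z i) (M N) := by
            refine Finset.sum_congr rfl (fun i _ => ?_)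
            rw [← Finset.sum_filter, Finset.sum_const, hcnt, smul_eq_mul, Nat.mul_comm]
        _ = (m + 3*n) * ∑ i : Fin p, cnt (z i) (M N) := by rw [← Finset.mul_sum]
    have hcC : cnt w N = C.card := rfl
    have hsplit : n * C.card = n * E.card + n := by
      rw [← hEcard]; ring
    rw [hcC]
    omega
  -- analytic part
  have hm' : (0:ℝ) < m := by exact_mod_cast hm
  have hn' : (0:ℝ) < n := by exact_mod_cast hn1
  have hp' : (0:ℝ) < p := by exact_mod_cast hp
  have hcnt_le : ∀ (u : List A) (N : ℕ), cnt u N ≤ N := by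
    intro u N
    rw [hcnt]
    calc (Finset.filter (Q u) (Finset.range N)).card
        ≤ (Finset.range N).card := Finset.card_filter_le _ _
      _ = N := Finset.card_range N
  set a : ℕ → ℝ := fun N => (cnt w N : ℝ)/N with haa
  set s : Fin p → ℕ → ℝ := fun i N => (cnt (z i) N : ℝ)/N with hss
  have ha0 : ∀ N, 0 ≤ a N := fun N => div_nonneg (Nat.cast_nonneg _) (Nat.cast_nonneg _)
  have hs0 : ∀ i N, 0 ≤ s i N := fun i N => div_nonneg (Nat.cast_nonneg _) (Nat.cast_nonneg _)
  have hs1 : ∀ i N, s i N ≤ 1 := fun i N =>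
    div_le_one_of_le₀ (Nat.cast_le.mpr (hcnt_le _ _)) (Nat.cast_nonneg _)
  have hsumsP : ∀ N, (∑ i : Fin p, s i N) ≤ (p : ℝ) := by
    intro N
    calc (∑ i : Fin p, s i N) ≤ ∑ _i : Fin p, (1:ℝ) :=
          Finset.sum_le_sum (fun i _ => hs1 i _)
      _ = p := by simp
  have hMtendsto : Filter.Tendsto M Filter.atTop Filter.atTop := by
    rw [Filter.tendsto_atTop_atTop]
    intro b
    refine ⟨b * m, fun N hN => ?_⟩
    have h1 : b * m ≤ N * n := by
      calc b * m ≤ N := hN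
        _ ≤ N * n := Nat.le_mul_of_pos_right N hn1
    have h2 : b ≤ N * n / m := by
      calc b = b * m / m := (Nat.mul_div_cancel b hm).symm
        _ ≤ N * n / m := Nat.div_le_div_right h1
    calc b ≤ N * n / m := h2
      _ ≤ M N := Nat.le_succ _
  set cst : ℝ := ((m:ℝ) + 3*n)/m with hcst
  have hcst0 : 0 < cst := by
    rw [hcst]
    apply div_pos (by linarith) hm'
  set Cc : ℝ := ((m:ℝ)+3*n)/n * p + 1 with hCc
  have hCc0 : (0:ℝ) ≤ Cc := by
    rw [hCc]
    have : (0:ℝ) ≤ ((m:ℝ)+3*n)/n * p := by positivity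
    linarith
  have hkey2 : ∀ N : ℕ, 1 ≤ N → a N ≤ cst * (∑ i : Fin p, s i (M N)) + Cc / N := by
    intro N hN
    have hNpos : (0:ℝ) < N := by exact_mod_cast hN
    have hMnat : 0 < M N := Nat.succ_pos _
    have hMpos : (0:ℝ) < (M N : ℝ) := by exact_mod_cast hMnat
    have hk' : (n:ℝ) * (cnt w N : ℝ)
        ≤ ((m:ℝ) + 3*n) * (∑ i : Fin p, (cnt (z i) (M N) : ℝ)) + n := by
      have hh := key N
      have : ((n * cnt w N : ℕ) : ℝ)
          ≤ (((m + 3*n) * (∑ i : Fin p, cnt (z i) (M N)) + n : ℕ) : ℝ) :=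
        Nat.cast_le.mpr hh
      push_cast at this
      linarith
    have hMle : (M N : ℝ) ≤ (N:ℝ)*n/m + 1 := by
      have h1 : ((N*n/m : ℕ) : ℝ) ≤ ((N*n : ℕ):ℝ)/(m:ℝ) := Nat.cast_div_le
      have h2 : (M N : ℝ) = ((N*n/m : ℕ) : ℝ) + 1 := by rw [hM]; push_cast; ring
      push_cast at h1
      linarith
    have hsum1 : (∑ i : Fin p, (cnt (z i) (M N):ℝ))
        ≤ (∑ i : Fin p, s i (M N)) * ((N:ℝ)*n/m + 1) := by
      rw [Finset.sum_mul]
      refine Finset.sum_le_sum (fun i _ => ?_)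
      have hh : (cnt (z i) (M N):ℝ) = s i (M N) * (M N) :=
        (div_mul_cancel₀ _ (ne_of_gt hMpos)).symm
      rw [hh]
      exact mul_le_mul_of_nonneg_left hMle (hs0 i _)
    have hsum0 : 0 ≤ (∑ i : Fin p, s i (M N)) :=
      Finset.sum_nonneg (fun i _ => hs0 i _)
    have f2 : (m:ℝ) * (∑ i : Fin p, (cnt (z i) (M N):ℝ))
        ≤ (∑ i : Fin p, s i (M N)) * ((N:ℝ)*n + m) := by
      have hh := mul_le_mul_of_nonneg_left hsum1 hm'.le
      calc (m:ℝ) * (∑ i : Fin p, (cnt (z i) (M N):ℝ))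
          ≤ m * ((∑ i : Fin p, s i (M N)) * ((N:ℝ)*n/m + 1)) := hh
        _ = (∑ i : Fin p, s i (M N)) * ((N:ℝ)*n + m) := by
            field_simp
    show (cnt w N : ℝ)/N ≤ cst * (∑ i : Fin p, s i (M N)) + Cc / N
    rw [div_le_iff₀ hNpos]
    refine le_of_mul_le_mul_left ?_ (show (0:ℝ) < n*m by positivity)
    have hexp : ((n:ℝ)*m)*((cst * (∑ i : Fin p, s i (M N)) + Cc/N)*N)
        = n*((m:ℝ)+3*n)*(∑ i : Fin p, s i (M N))*N + m*((m:ℝ)+3*n)*p + n*m := by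
      rw [hcst, hCc]
      field_simp
      ring
    rw [hexp]
    have g1 := mul_le_mul_of_nonneg_left hk' hm'.le
    have g2 := mul_le_mul_of_nonneg_left f2
      (show (0:ℝ) ≤ (m:ℝ)+3*n by linarith)
    have g3 := mul_le_mul_of_nonneg_left (hsumsP (M N))
      (show (0:ℝ) ≤ ((m:ℝ)+3*n)*m by nlinarith)
    linarith [g1, g2, g3]
  set t : ℕ → ℝ := fun N => cst * (∑ i : Fin p, s i (M N)) with htt
  set e : ℕ → ℝ := fun N => Cc / N with hee
  have ht0 : ∀ N, 0 ≤ t N := fun N =>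
    mul_nonneg hcst0.le (Finset.sum_nonneg fun i _ => hs0 i _)
  have ht1 : ∀ N, t N ≤ cst * p := fun N =>
    mul_le_mul_of_nonneg_left (hsumsP _) hcst0.le
  have he0' : ∀ N, 0 ≤ e N := fun N => div_nonneg hCc0 (Nat.cast_nonneg _)
  have he1 : ∀ N, e N ≤ Cc := by
    intro N
    rcases Nat.eq_zero_or_pos N with h | h
    · subst h
      show Cc / ((0:ℕ):ℝ) ≤ Cc
      rw [Nat.cast_zero, div_zero]
      exact hCc0
    · exact div_le_self hCc0 (by exact_mod_cast h)
  have hstep1 : Filter.limsup a Filter.atTop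
      ≤ Filter.limsup (fun N => t N + e N) Filter.atTop := by
    refine Filter.limsup_le_limsup ?_ ?_ ?_
    · filter_upwards [Filter.eventually_ge_atTop 1] with N hN
      exact hkey2 N hN
    · exact Filter.isCoboundedUnder_le_of_le _ ha0
    · exact Filter.isBoundedUnder_of ⟨cst * p + Cc, fun N => add_le_add (ht1 N) (he1 N)⟩
  have hstep2 : Filter.limsup (fun N => t N + e N) Filter.atTop
      ≤ Filter.limsup t Filter.atTop + Filter.limsup e Filter.atTop := by
    exact limsup_add_le (Filter.isBoundedUnder_of ⟨0, ht0⟩)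
      (Filter.isBoundedUnder_of ⟨cst*p, ht1⟩)
      (Filter.isCoboundedUnder_le_of_le _ he0')
      (Filter.isBoundedUnder_of ⟨Cc, he1⟩)
  have he0 : Filter.limsup e Filter.atTop = 0 := by
    refine Filter.Tendsto.limsup_eq ?_
    have : Filter.Tendsto (fun N : ℕ => Cc / (N:ℝ)) Filter.atTop (nhds 0) :=
      tendsto_const_div_atTop_nhds_zero_nat Cc
    exact this
  have hstep3 : Filter.limsup t Filter.atTop
      ≤ cst * (∑ i : Fin p, Filter.limsup (s i) Filter.atTop) := by
    have h1 : Filter.limsup t Filter.atTop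
        ≤ cst * Filter.limsup (fun N => ∑ i : Fin p, s i (M N)) Filter.atTop := by
      have h2 := limsup_mul_le (f := Filter.atTop) (u := fun _ : ℕ => cst)
        (v := fun N => ∑ i : Fin p, s i (M N))
        (Filter.Eventually.of_forall fun _ => hcst0.le).frequently
        (Filter.isBoundedUnder_of ⟨cst, fun _ => le_rfl⟩)
        (Filter.Eventually.of_forall fun N => Finset.sum_nonneg fun i _ => hs0 i _)
        (Filter.isBoundedUnder_of ⟨(p:ℝ), fun N => hsumsP _⟩)
      rw [Filter.limsup_const] at h2
      exact h2
    have h2 : Filter.limsup (fun N => ∑ i : Fin p, s i (M N)) Filter.atTop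
        ≤ ∑ i : Fin p, Filter.limsup (fun N => s i (M N)) Filter.atTop :=
      aux_limsup_sum_le Finset.univ (fun i N => s i (M N))
        (fun i N => hs0 i _) (fun i N => hs1 i _)
    have h3 : ∀ i : Fin p, Filter.limsup (fun N => s i (M N)) Filter.atTop
        ≤ Filter.limsup (s i) Filter.atTop := fun i =>
      aux_limsup_comp_le (s i) M hMtendsto (hs0 i) (hs1 i)
    calc Filter.limsup t Filter.atTop
        ≤ cst * Filter.limsup (fun N => ∑ i : Fin p, s i (M N)) Filter.atTop := h1
      _ ≤ cst * ∑ i : Fin p, Filter.limsup (fun N => s i (M N)) Filter.atTop :=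
          mul_le_mul_of_nonneg_left h2 hcst0.le
      _ ≤ cst * ∑ i : Fin p, Filter.limsup (s i) Filter.atTop :=
          mul_le_mul_of_nonneg_left (Finset.sum_le_sum fun i _ => h3 i) hcst0.le
  have hfinal : blockDensity K w x ≤ cst * (∑ i : Fin p, blockDensity K (z i) x) := by
    have hbw : blockDensity K w x = Filter.limsup a Filter.atTop := hbd w
    have hbz : ∀ i : Fin p, blockDensity K (z i) x = Filter.limsup (s i) Filter.atTop :=
      fun i => hbd (z i)
    rw [hbw]
    calc Filter.limsup a Filter.atTop
        ≤ Filter.limsup (fun N => t N + e N) Filter.atTop := hstep1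
      _ ≤ Filter.limsup t Filter.atTop + Filter.limsup e Filter.atTop := hstep2
      _ = Filter.limsup t Filter.atTop := by rw [he0, add_zero]
      _ ≤ cst * (∑ i : Fin p, Filter.limsup (s i) Filter.atTop) := hstep3
      _ = cst * (∑ i : Fin p, blockDensity K (z i) x) := by
          rw [show (∑ i : Fin p, Filter.limsup (s i) Filter.atTop)
              = ∑ i : Fin p, blockDensity K (z i) x from
            Finset.sum_congr rfl fun i _ => (hbz i).symm]
  -- conclude by contradiction
  by_contra hcon
  push_neg at hcon
  haveI : Nonempty (Fin p) := ⟨⟨0, hp⟩⟩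
  set c : ℝ := 1 / ((p:ℝ) * (1 + 3*(n:ℝ)/(m:ℝ))) with hc
  set D := blockDensity K w x with hD
  have hsumlt : (∑ i : Fin p, blockDensity K (z i) x) < ∑ _i : Fin p, c * D :=
    Finset.sum_lt_sum_of_nonempty Finset.univ_nonempty (fun i _ => hcon i)
  have hsc : (∑ _i : Fin p, c * D) = (p:ℝ) * (c * D) := by
    rw [Finset.sum_const, Finset.card_univ, Fintype.card_fin, nsmul_eq_mul]
  have hms : ((m:ℝ) + 3*n) ≠ 0 := by positivity
  have hfar : cst * ((p:ℝ) * (c * D)) = D := by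
    rw [hcst, hc]
    have h1 : 1 + 3*(n:ℝ)/m = ((m:ℝ) + 3*n)/m := by field_simp
    rw [h1]
    field_simp
  have hDD : D < D := by
    calc D ≤ cst * (∑ i : Fin p, blockDensity K (z i) x) := hfinal
      _ < cst * (∑ _i : Fin p, c * D) := mul_lt_mul_of_pos_left hsumlt hcst0
      _ = cst * ((p:ℝ) * (c*D)) := by rw [hsc]
      _ = D := hfar
  exact absurd hDD (lt_irrefl D)
end

section
/- Let L be a recurrent language over a finite alphabet satisfying the Regular Bispecial Condition: there exists n₀ such that every bispecial word w ∈ L of length ≥ n₀ is regular bispecial. Then for every n₂ ≥ n₁ ≥ n₀ and every left special word w of length n₁, there exists a unique left special word w' of length n₂ such that w is the prefix of w' of length n₁. -/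
/-- `w` is right special in `L`. -/
def RightSpecial {A : Type*} (L : Set (List A)) (w : List A) : Prop :=
  ∃ a b : A, a ≠ b ∧ (w ++ [a]) ∈ L ∧ (w ++ [b]) ∈ L

/-- `w` is bispecial in `L`. -/
def Bispecial {A : Type*} (L : Set (List A)) (w : List A) : Prop :=
  LeftSpecial L w ∧ RightSpecial L w

/-- `w` is regular bispecial: exactly one left extension `a·w` is right
special and exactly one right extension `w·b` is left special. -/
def RegularBispecial {A : Type*} (L : Set (List A)) (w : List A) : Prop :=
  Bispecial L w ∧
  (∃! a : A, (a :: w) ∈ L ∧ RightSpecial L (a :: w)) ∧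
  (∃! b : A, (w ++ [b]) ∈ L ∧ LeftSpecial L (w ++ [b]))

/-- Key step: a left special word of length `≥ n₀` has a unique left special
one-letter right extension. -/
lemma step_unique {A : Type*} {L : Set (List A)} (hL : IsLanguage L) (n₀ : ℕ)
    (hRBC : ∀ w ∈ L, n₀ ≤ w.length → Bispecial L w → RegularBispecial L w)
    {w : List A} (hw : w ∈ L) (hlen : n₀ ≤ w.length) (hws : LeftSpecial L w) :
    ∃! b : A, (w ++ [b]) ∈ L ∧ LeftSpecial L (w ++ [b]) := by
  obtain ⟨a, b, hab, haw, hbw⟩ := hws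
  obtain ⟨a₁, c, hc⟩ := hL.2.2 _ haw
  obtain ⟨b₁, d, hd⟩ := hL.2.2 _ hbw
  have hawc : (a :: (w ++ [c])) ∈ L := by
    apply hL.2.1 _ hc _ (by simp)
    exact ⟨[a₁], [], by simp⟩
  have hbwd : (b :: (w ++ [d])) ∈ L := by
    apply hL.2.1 _ hd _ (by simp)
    exact ⟨[b₁], [], by simp⟩
  have hwc : (w ++ [c]) ∈ L :=
    hL.2.1 _ hawc _ (by simp) (List.suffix_cons _ _).isInfix
  have hwd : (w ++ [d]) ∈ L :=
    hL.2.1 _ hbwd _ (by simp) (List.suffix_cons _ _).isInfix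
  by_cases hcd : c = d
  · subst hcd
    refine ⟨c, ⟨hwc, a, b, hab, hawc, hbwd⟩, ?_⟩
    intro e ⟨hwe, hse⟩
    by_cases hec : e = c
    · exact hec
    · have hbis : Bispecial L w :=
        ⟨⟨a, b, hab, haw, hbw⟩, ⟨e, c, hec, hwe, hwc⟩⟩
      obtain ⟨_, _, u, hu, huniq⟩ := hRBC w hw hlen hbis
      rw [huniq e ⟨hwe, hse⟩, huniq c ⟨hwc, a, b, hab, hawc, hbwd⟩]
  · have hbis : Bispecial L w :=
      ⟨⟨a, b, hab, haw, hbw⟩, ⟨c, d, hcd, hwc, hwd⟩⟩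
    exact (hRBC w hw hlen hbis).2.2

/-- If a recurrent language `L` satisfies the Regular Bispecial
Condition with constant `n₀` (every bispecial word of length `≥ n₀` is regular
bispecial), then for every `n₂ ≥ n₁ ≥ n₀` and every left special word `w` of
length `n₁`, there is a unique left special word `w'` of length `n₂` whose
prefix of length `n₁` is `w`. -/
theorem stmt18 {A : Type*} [Fintype A] (L : Set (List A)) (hL : IsLanguage L)
    (hrec : IsRecurrent L) (n₀ : ℕ)
    (hRBC : ∀ w ∈ L, n₀ ≤ w.length → Bispecial L w → RegularBispecial L w)
    (n₁ n₂ : ℕ) (h01 : n₀ ≤ n₁) (h12 : n₁ ≤ n₂)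
    (w : List A) (hw : w ∈ L) (hwlen : w.length = n₁) (hws : LeftSpecial L w) :
    ∃! w' : List A,
      w' ∈ L ∧ w'.length = n₂ ∧ LeftSpecial L w' ∧ w'.take n₁ = w := by
  have hwpos : 1 ≤ w.length := List.length_pos_iff.mpr (hL.1 w hw)
  induction n₂, h12 using Nat.le_induction with
  | base =>
    refine ⟨w, ⟨hw, hwlen, hws, by rw [← hwlen, List.take_length]⟩, ?_⟩
    rintro w' ⟨_, hlen', _, htake⟩
    rw [← htake, List.take_of_length_le (le_of_eq hlen')]
  | succ m hm ih =>
    obtain ⟨v, ⟨hv, hvlen, hvs, hvtake⟩, hviq⟩ := ih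
    obtain ⟨b, ⟨hvb, hvbs⟩, hbiq⟩ :=
      step_unique hL n₀ hRBC hv (by omega) hvs
    refine ⟨v ++ [b], ⟨hvb, by simp [hvlen], hvbs, ?_⟩, ?_⟩
    · rw [List.take_append_of_le_length (by omega), hvtake]
    · rintro w'' ⟨hw'', hlen'', hs'', htake''⟩
      have hne : w'' ≠ [] := by
        intro h; rw [h] at hlen''; simp at hlen''
      set u := w''.dropLast with hu
      set c := w''.getLast hne with hc
      have hdecomp : w'' = u ++ [c] := (List.dropLast_append_getLast hne).symm
      have hulen : u.length = m := by
        rw [hu, List.length_dropLast, hlen'']; omega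
      obtain ⟨a, b', hab', ha, hb'⟩ := hs''
      have hau : (a :: u) ∈ L := by
        apply hL.2.1 _ ha _ (by simp)
        rw [hdecomp]; exact ⟨[], [c], by simp⟩
      have hbu : (b' :: u) ∈ L := by
        apply hL.2.1 _ hb' _ (by simp)
        rw [hdecomp]; exact ⟨[], [c], by simp⟩
      have hune : u ≠ [] := by
        intro h; rw [h] at hulen; simp at hulen; omega
      have huL : u ∈ L :=
        hL.2.1 _ hau _ hune (List.suffix_cons _ _).isInfix
      have hus : LeftSpecial L u := ⟨a, b', hab', hau, hbu⟩
      have hutake : u.take n₁ = w := by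
        rw [← htake'', hdecomp, List.take_append_of_le_length (by omega)]
      have huv : u = v := hviq u ⟨huL, hulen, hus, hutake⟩
      have hwd : w'' = v ++ [c] := by rw [hdecomp, huv]
      have hcb : c = b := by
        apply hbiq
        rw [← hwd]
        exact ⟨hw'', a, b', hab', ha, hb'⟩
      rw [hwd, hcb]
end

section
/- Let L be a recurrent language satisfying the Regular Bispecial Condition. Then L has eventually constant growth: there exist K ∈ ℕ and N₀ such that p(n+1) − p(n) = K for all n ≥ N₀, where p(n) is the number of words of length n in L. -/
section Aux

open Finset
open scoped Classical

variable {A : Type*} [Fintype A]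

open Classical in
/-- Left extension letters of `w`. -/
noncomputable def lext (L : Set (List A)) (w : List A) : Finset A :=
  Finset.univ.filter (fun a => a :: w ∈ L)

open Classical in
/-- Right extension letters of `w`. -/
noncomputable def rext (L : Set (List A)) (w : List A) : Finset A :=
  Finset.univ.filter (fun b => w ++ [b] ∈ L)

lemma mem_lext {L : Set (List A)} {w : List A} {a : A} :
    a ∈ lext L w ↔ a :: w ∈ L := by simp [lext]

lemma mem_rext {L : Set (List A)} {w : List A} {b : A} :
    b ∈ rext L w ↔ w ++ [b] ∈ L := by simp [rext]

/-- The finite set of words of length `n` in `L`. -/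
noncomputable def words (L : Set (List A)) (n : ℕ) : Finset (List A) :=
  (Set.Finite.inter_of_right (List.finite_length_eq A n) L).toFinset

lemma mem_words {L : Set (List A)} {n : ℕ} {w : List A} :
    w ∈ words L n ↔ w ∈ L ∧ w.length = n := by
  simp [words, Set.Finite.mem_toFinset, Set.mem_inter_iff, and_comm]

lemma leftSpecial_iff_card {L : Set (List A)} {w : List A} :
    LeftSpecial L w ↔ 1 < (lext L w).card := by
  constructor
  · rintro ⟨a, b, hab, ha, hb⟩
    exact Finset.one_lt_card.mpr ⟨a, mem_lext.2 ha, b, mem_lext.2 hb, hab⟩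
  · intro h
    obtain ⟨a, ha, b, hb, hab⟩ := Finset.one_lt_card.mp h
    exact ⟨a, b, hab, mem_lext.1 ha, mem_lext.1 hb⟩

lemma lext_append_subset {L : Set (List A)} (hL : IsLanguage L) (w : List A) (b : A) :
    lext L (w ++ [b]) ⊆ lext L w := by
  intro a ha
  rw [mem_lext] at ha ⊢
  exact hL.2.1 _ ha (a :: w) (List.cons_ne_nil _ _)
    (List.IsPrefix.isInfix ⟨[b], by simp⟩)

lemma lext_nonempty {L : Set (List A)} (hL : IsLanguage L) {w : List A} (hw : w ∈ L) :
    (lext L w).Nonempty := by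
  obtain ⟨a, b, hab⟩ := hL.2.2 w hw
  refine ⟨a, mem_lext.2 ?_⟩
  exact hL.2.1 _ hab (a :: w) (List.cons_ne_nil _ _)
    (List.IsPrefix.isInfix ⟨[b], by simp⟩)

lemma complexity_eq_card (L : Set (List A)) (n : ℕ) :
    complexity L n = (words L n).card := by
  have h : {w : List A | w ∈ L ∧ w.length = n} = L ∩ {l : List A | l.length = n} := by
    ext w; simp [Set.mem_inter_iff]
  rw [complexity, h,
    Set.ncard_eq_toFinset_card _ (Set.Finite.inter_of_right (List.finite_length_eq A n) L)]
  rfl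

lemma words_succ_cons {L : Set (List A)} (hL : IsLanguage L) {n : ℕ} (hn : 1 ≤ n) :
    words L (n + 1) = (words L n).biUnion (fun w => (lext L w).image (fun a => a :: w)) := by
  ext v
  simp only [mem_words, Finset.mem_biUnion, Finset.mem_image]
  constructor
  · rintro ⟨hv, hlen⟩
    have hne : v ≠ [] := by
      intro h; rw [h] at hlen; simp at hlen
    obtain ⟨a, w, rfl⟩ := List.exists_cons_of_ne_nil hne
    have hwlen : w.length = n := by simpa using hlen
    have hw : w ∈ L := by
      refine hL.2.1 _ hv w ?_ (List.IsSuffix.isInfix ⟨[a], rfl⟩)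
      intro h; rw [h] at hwlen; simp [← hwlen] at hn
    exact ⟨w, ⟨hw, hwlen⟩, a, mem_lext.2 hv, rfl⟩
  · rintro ⟨w, ⟨hw, hwlen⟩, a, ha, rfl⟩
    exact ⟨mem_lext.1 ha, by simp [hwlen]⟩

lemma words_succ_append {L : Set (List A)} (hL : IsLanguage L) {n : ℕ} (hn : 1 ≤ n) :
    words L (n + 1) = (words L n).biUnion (fun w => (rext L w).image (fun b => w ++ [b])) := by
  ext v
  simp only [mem_words, Finset.mem_biUnion, Finset.mem_image]
  constructor
  · rintro ⟨hv, hlen⟩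
    have hne : v ≠ [] := by
      intro h; rw [h] at hlen; simp at hlen
    have hsplit : v.dropLast ++ [v.getLast hne] = v := List.dropLast_append_getLast hne
    have hwlen : v.dropLast.length = n := by
      rw [List.length_dropLast, hlen]; rfl
    have hw : v.dropLast ∈ L := by
      refine hL.2.1 _ hv _ ?_ (List.IsPrefix.isInfix (List.dropLast_prefix v))
      intro h; rw [h] at hwlen; simp [← hwlen] at hn
    exact ⟨v.dropLast, ⟨hw, hwlen⟩, v.getLast hne, mem_rext.2 (by rw [hsplit]; exact hv), hsplit⟩
  · rintro ⟨w, ⟨hw, hwlen⟩, b, hb, rfl⟩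
    exact ⟨mem_rext.1 hb, by simp [hwlen]⟩

/-- The growth increment `p(n+1) - p(n)`. -/
noncomputable def sGrow (L : Set (List A)) (n : ℕ) : ℕ :=
  ∑ w ∈ words L n, ((lext L w).card - 1)

lemma growth_eq {L : Set (List A)} (hL : IsLanguage L) {n : ℕ} (hn : 1 ≤ n) :
    complexity L (n + 1) = complexity L n + sGrow L n := by
  rw [complexity_eq_card, complexity_eq_card, words_succ_cons hL hn]
  have hdisj : ∀ w ∈ words L n, ∀ w' ∈ words L n, w ≠ w' →
      Disjoint ((lext L w).image (fun a => a :: w)) ((lext L w').image (fun a => a :: w')) := by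
    intro w _ w' _ hne
    rw [Finset.disjoint_left]
    rintro v hv hv'
    obtain ⟨a, _, rfl⟩ := Finset.mem_image.1 hv
    obtain ⟨a', _, h⟩ := Finset.mem_image.1 hv'
    injection h with h1 h2
    exact hne h2.symm
  rw [Finset.card_biUnion hdisj]
  have himg : ∀ w : List A, ((lext L w).image (fun a => a :: w)).card = (lext L w).card := by
    intro w
    exact Finset.card_image_of_injective _ (fun a b h => by injection h)
  calc ∑ w ∈ words L n, ((lext L w).image (fun a => a :: w)).card
      = ∑ w ∈ words L n, (1 + ((lext L w).card - 1)) := by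
        refine Finset.sum_congr rfl (fun w hw => ?_)
        rw [himg, Nat.add_sub_cancel' ]
        exact Finset.card_pos.2 (lext_nonempty hL (mem_words.1 hw).1)
    _ = (words L n).card + sGrow L n := by
        rw [Finset.sum_add_distrib, sGrow]
        simp

lemma sGrow_succ_le {L : Set (List A)} (hL : IsLanguage L) {n₀ : ℕ}
    (hR : ∀ w ∈ L, n₀ ≤ w.length → Bispecial L w → RegularBispecial L w)
    {n : ℕ} (hn0 : n₀ ≤ n) (hn : 1 ≤ n) :
    sGrow L (n + 1) ≤ sGrow L n := by
  rw [sGrow, words_succ_append hL hn]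
  have hdisj : Set.PairwiseDisjoint (↑(words L n))
      (fun w => (rext L w).image (fun b => w ++ [b])) := by
    intro w _ w' _ hne
    rw [Function.onFun, Finset.disjoint_left]
    rintro v hv hv'
    obtain ⟨b, _, rfl⟩ := Finset.mem_image.1 hv
    obtain ⟨b', _, h⟩ := Finset.mem_image.1 hv'
    apply hne
    have := congrArg List.dropLast h
    simpa [List.dropLast_concat] using this.symm
  rw [Finset.sum_biUnion hdisj, sGrow]
  refine Finset.sum_le_sum (fun w hw => ?_)
  have hinj : ∀ x ∈ rext L w, ∀ y ∈ rext L w,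
      (fun b => w ++ [b]) x = (fun b => w ++ [b]) y → x = y := by
    intro x _ y _ h
    simpa using h
  rw [Finset.sum_image hinj]
  obtain ⟨hwL, hwlen⟩ := mem_words.1 hw
  by_cases hex : ∃ b ∈ rext L w, 1 < (lext L (w ++ [b])).card
  · obtain ⟨b, hb, h2⟩ := hex
    have hzero : ∀ b' ∈ rext L w, b' ≠ b → (lext L (w ++ [b'])).card - 1 = 0 := by
      intro b' hb' hne
      by_contra hcon
      have h2' : 1 < (lext L (w ++ [b'])).card := by omega
      have hls : LeftSpecial L (w ++ [b]) := leftSpecial_iff_card.2 h2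
      have hls' : LeftSpecial L (w ++ [b']) := leftSpecial_iff_card.2 h2'
      have hwls : LeftSpecial L w := by
        rw [leftSpecial_iff_card]
        exact lt_of_lt_of_le h2 (Finset.card_le_card (lext_append_subset hL w b))
      have hwrs : RightSpecial L w := ⟨b', b, hne, mem_rext.1 hb', mem_rext.1 hb⟩
      obtain ⟨_, _, c, -, huniq⟩ := hR w hwL (hwlen ▸ hn0) ⟨hwls, hwrs⟩
      exact hne ((huniq b' ⟨mem_rext.1 hb', hls'⟩).trans (huniq b ⟨mem_rext.1 hb, hls⟩).symm)
    rw [Finset.sum_eq_single_of_mem b hb hzero]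
    exact Nat.sub_le_sub_right (Finset.card_le_card (lext_append_subset hL w b)) 1
  · push_neg at hex
    have : ∑ b ∈ rext L w, ((lext L (w ++ [b])).card - 1) = 0 := by
      refine Finset.sum_eq_zero (fun b hb => ?_)
      have := hex b hb
      omega
    omega

end Aux

/-- A recurrent language satisfying the Regular Bispecial
Condition has eventually constant growth: there exist `K` and `N₀` with
`p(n+1) - p(n) = K` for all `n ≥ N₀`. -/
theorem stmt19 {A : Type*} [Fintype A] (L : Set (List A)) (hL : IsLanguage L)
    (hrec : IsRecurrent L)
    (hRBC : ∃ n₀ : ℕ, ∀ w ∈ L, n₀ ≤ w.length → Bispecial L w →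
      RegularBispecial L w) :
    ∃ K N₀ : ℕ, ∀ n : ℕ, N₀ ≤ n →
      complexity L (n + 1) = complexity L n + K := by
  obtain ⟨n₀, hR⟩ := hRBC
  set N : ℕ := max n₀ 1 with hNdef
  have hmono : ∀ m n : ℕ, N ≤ n → n ≤ m → sGrow L m ≤ sGrow L n := by
    intro m n hn hnm
    induction m, hnm using Nat.le_induction with
    | base => exact le_rfl
    | succ m hm ih =>
      refine le_trans (sGrow_succ_le hL hR ?_ ?_) ih
      · exact le_trans (le_max_left _ _) (le_trans hn hm)
      · exact le_trans (le_max_right _ _) (le_trans hn hm)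
  -- the set of values of sGrow at indices ≥ N
  set S : Set ℕ := Set.range (fun k => sGrow L (N + k)) with hSdef
  have hSne : S.Nonempty := ⟨sGrow L (N + 0), 0, rfl⟩
  obtain ⟨k0, hk0⟩ : sInf S ∈ S := Nat.sInf_mem hSne
  refine ⟨sInf S, N + k0, fun n hn => ?_⟩
  have hn1 : 1 ≤ n := le_trans (le_max_right _ _) (le_trans (Nat.le_add_right N k0) hn)
  have hsn : sGrow L n = sInf S := by
    refine le_antisymm ?_ ?_
    · rw [← hk0]
      exact hmono n (N + k0) (Nat.le_add_right N k0) hn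
    · refine Nat.sInf_le ?_
      exact ⟨n - N, by
        have : N ≤ n := le_trans (Nat.le_add_right N k0) hn
        simp [Nat.add_sub_cancel' this]⟩
  rw [growth_eq hL hn1, hsn]
end
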